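/- arXiv:2509.18991 — 5 statements merged into one kernel-verified Lean document; each statement's English description precedes it below -/
import Mathlib

section
/- Assume ℵ_ω is a strong limit cardinal and every subset A of the generalized Baire space (ℵ_ω)^ω has the ℵ_ω-PSP. Then the Singular Cardinal Hypothesis fails at ℵ_ω; that is, 2^{ℵ_ω} ≠ ℵ_{ω+1}. (Proposition 3.4(1).) -/
noncomputable section
open Cardinal Set

/-- The ordinal below `o` corresponding to an element of the order type `o.ToType`. -/
def ordinalOf {o : Ordinal} (x : o.ToType) : Ordinal :=
  ((Ordinal.ToType.mk (o := o)).symm x : Set.Iio o).1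

/-- Each ordinal's order type carries the discrete topology; the generalized Baire
space `κ^ω = ℕ → κ.ord.ToType` then carries the product topology. -/
instance (o : Ordinal) : TopologicalSpace o.ToType := ⊥

/-- A subset of the generalized Baire space `κ^ω` is `κ`-perfect if it is nonempty,
closed, and every open neighborhood of each of its points meets it in a set of
cardinality at least `κ`. -/
def IsKappaPerfect (κ : Cardinal) (P : Set (ℕ → κ.ord.ToType)) : Prop :=
  P.Nonempty ∧ IsClosed P ∧
    ∀ x ∈ P, ∀ U : Set (ℕ → κ.ord.ToType), IsOpen U → x ∈ U → κ ≤ #(P ∩ U : Set _)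

/-- A set `A ⊆ κ^ω` has the `κ`-perfect set property if either `|A| ≤ κ` or `A`
contains a `κ`-perfect subset. -/
def HasKappaPSP (κ : Cardinal) (A : Set (ℕ → κ.ord.ToType)) : Prop :=
  #A ≤ κ ∨ ∃ P ⊆ A, IsKappaPerfect κ P

set_option linter.unusedSectionVars false

instance (o : Ordinal) : DiscreteTopology o.ToType := ⟨rfl⟩



namespace SCHAux
open Ordinal
variable {T : Type*} [TopologicalSpace T] [DiscreteTopology T]

def cyl (x : ℕ → T) (n : ℕ) : Set (ℕ → T) := {y | ∀ i < n, y i = x i}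

lemma mem_cyl_self (x : ℕ → T) (n : ℕ) : x ∈ cyl x n := fun _ _ => rfl

lemma isOpen_cyl (x : ℕ → T) (n : ℕ) : IsOpen (cyl x n) := by
  have : cyl x n = Set.pi (Set.Iio n) (fun i => {x i}) := by
    ext y; simp [cyl, Set.mem_pi]
  rw [this]
  exact isOpen_set_pi (Set.finite_Iio n) (fun i _ => isOpen_discrete _)

lemma exists_cyl_subset {U : Set (ℕ → T)} (hU : IsOpen U) {x : ℕ → T} (hx : x ∈ U) :
    ∃ n, cyl x n ⊆ U := by
  rcases isOpen_pi_iff.1 hU x hx with ⟨I, u, hu, hsub⟩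
  rcases I.bddAbove with ⟨n, hn⟩
  refine ⟨n + 1, fun y hy => hsub ?_⟩
  intro i hi
  rw [hy i (Nat.lt_succ_of_le (hn hi))]
  exact (hu i hi).2

lemma mem_closure_iff_cyl {C : Set (ℕ → T)} {y : ℕ → T} :
    y ∈ closure C ↔ ∀ n, ∃ p ∈ C, ∀ i < n, p i = y i := by
  constructor
  · intro h n
    rcases mem_closure_iff.1 h (cyl y n) (isOpen_cyl y n) (mem_cyl_self y n) with ⟨p, hp1, hp2⟩
    exact ⟨p, hp2, hp1⟩
  · intro h
    rw [mem_closure_iff]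
    intro U hU hyU
    rcases exists_cyl_subset hU hyU with ⟨n, hn⟩
    rcases h n with ⟨p, hpC, hp⟩
    exact ⟨p, hn hp, hpC⟩

end SCHAux

namespace SCHAux3
open Ordinal SCHAux
universe u

abbrev kappa : Cardinal.{u} := Cardinal.aleph.{u} Ordinal.omega0

abbrev T : Type u := kappa.{u}.ord.ToType
abbrev X : Type u := ℕ → T.{u}
abbrev S (n : ℕ) : Type u := (Cardinal.aleph.{u} ((n : Ordinal.{u}) + 1)).ord.ToType

lemma mk_S (n : ℕ) : #(S.{u} n) = Cardinal.aleph ((n : Ordinal) + 1) := by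
  rw [Cardinal.mk_toType, card_ord]

lemma aleph_nat_lt (o : Ordinal) (h : o < Ordinal.omega0) : Cardinal.aleph.{u} o < kappa.{u} :=
  aleph_lt_aleph.2 h

lemma step (hsl : ∀ c < kappa.{u}, 2 ^ c < kappa.{u}) {P : Set X.{u}} (hP : IsKappaPerfect kappa.{u} P)
    {x : X.{u}} (hx : x ∈ P) (N n : ℕ) :
    ∃ M, N < M ∧ ∃ p : S.{u} n → X.{u},
      (∀ α, p α ∈ P ∧ ∀ i < N, p α i = x i) ∧
      (∀ α β, α ≠ β → ∃ i < M, p α i ≠ p β i) := by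
  set Q : Set X := P ∩ cyl x N with hQdef
  have hQ : kappa.{u} ≤ #Q := hP.2.2 x hx _ (isOpen_cyl x N) (mem_cyl_self x N)
  set R : ∀ M : ℕ, Set (Fin M → T) := fun M => (fun (q : X) (i : Fin M) => q i) '' Q with hRdef
  have hRmono : ∀ {M M' : ℕ}, M ≤ M' → #(R M) ≤ #(R M') := by
    intro M M' h
    have : R M = (fun (q : Fin M' → T) (i : Fin M) => q (Fin.castLE h i)) '' R M' := by
      rw [hRdef]
      rw [← Set.image_comp]
      rfl
    rw [this]
    exact mk_image_le
  have hlt : Cardinal.aleph ((n : Ordinal) + 1) < kappa.{u} := by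
    apply aleph_nat_lt
    rw [Ordinal.add_one_eq_succ]
    exact (Ordinal.isSuccLimit_omega0).succ_lt (nat_lt_omega0 n)
  have claim : ∃ M, Cardinal.aleph ((n : Ordinal) + 1) ≤ #(R M) := by
    by_contra hcl
    push_neg at hcl
    -- injection from Q into the product of the R M
    have hinj : #Q ≤ #(∀ M : ℕ, R M) := by
      refine mk_le_of_injective (f := fun (q : Q) (M : ℕ) =>
        (⟨fun i : Fin M => (q : X) i, ⟨(q : X), q.2, rfl⟩⟩ : R M)) ?_
      intro q1 q2 h
      ext i
      have h1 := congrFun h (i + 1)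
      have h2 := congrArg Subtype.val h1
      exact congrFun h2 ⟨i, Nat.lt_succ_self i⟩
    have hbig : #(∀ M : ℕ, R M) < kappa.{u} := by
      calc #(∀ M : ℕ, R M) = prod (fun M : ℕ => #(R M)) := mk_pi _
        _ ≤ prod (fun _ : ℕ => Cardinal.aleph ((n : Ordinal) + 1)) :=
            prod_le_prod _ _ (fun M => (hcl M).le)
        _ = Cardinal.aleph ((n : Ordinal) + 1) ^ (ℵ₀ : Cardinal.{u}) := by
            rw [prod_const]; simp
        _ ≤ (2 ^ Cardinal.aleph ((n : Ordinal) + 1)) ^ (ℵ₀ : Cardinal.{u}) :=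
            power_le_power_right (cantor _).le
        _ = 2 ^ (Cardinal.aleph ((n : Ordinal) + 1) * ℵ₀) := by rw [power_mul]
        _ = 2 ^ Cardinal.aleph ((n : Ordinal) + 1) := by
            rw [mul_aleph0_eq (aleph0_le_aleph _)]
        _ < kappa.{u} := hsl _ hlt
    exact absurd (hQ.trans hinj) (not_le.2 hbig)
  obtain ⟨M0, hM0⟩ := claim
  refine ⟨max (N + 1) M0, lt_of_lt_of_le (Nat.lt_succ_self N) (le_max_left _ _), ?_⟩
  set M := max (N + 1) M0 with hMdef
  have hM : Cardinal.aleph ((n : Ordinal) + 1) ≤ #(R M) :=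
    hM0.trans (hRmono (le_max_right _ _))
  rw [← mk_S n, le_def] at hM
  obtain ⟨e⟩ := hM
  have hsel : ∀ α : S n, ∃ q : X, q ∈ Q ∧ (fun i : Fin M => q i) = (e α : Fin M → T) := by
    intro α
    rcases (e α).2 with ⟨q, hq, hq2⟩
    exact ⟨q, hq, hq2⟩
  refine ⟨fun α => (hsel α).choose, fun α => ⟨((hsel α).choose_spec.1).1,
    fun i hi => ((hsel α).choose_spec.1).2 i hi⟩, ?_⟩
  intro α β hab
  have hne : (e α : Fin M → T) ≠ (e β : Fin M → T) := by
    intro hcon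
    exact hab (e.injective (Subtype.ext hcon))
  rcases Function.ne_iff.1 hne with ⟨i, hi⟩
  refine ⟨i, i.2, ?_⟩
  have ha := (hsel α).choose_spec.2
  have hb := (hsel β).choose_spec.2
  intro hcon
  apply hi
  rw [← congrFun ha i, ← congrFun hb i]
  exact hcon

open Classical in
def stData (hsl : ∀ c < kappa.{u}, 2 ^ c < kappa.{u}) {P : Set X.{u}}
    (hP : IsKappaPerfect kappa.{u} P) (x : X.{u}) (N n : ℕ) : (S.{u} n → X.{u}) × ℕ :=
  if h : x ∈ P then
    ((step hsl hP h N n).choose_spec.2.choose, (step hsl hP h N n).choose)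
  else (fun _ => x, N + 1)

lemma stData_spec (hsl : ∀ c < kappa.{u}, 2 ^ c < kappa.{u}) {P : Set X.{u}}
    (hP : IsKappaPerfect kappa.{u} P) {x : X.{u}} (hx : x ∈ P) (N n : ℕ) :
    N < (stData hsl hP x N n).2 ∧
    (∀ α, (stData hsl hP x N n).1 α ∈ P ∧ ∀ i < N, (stData hsl hP x N n).1 α i = x i) ∧
    (∀ α β, α ≠ β → ∃ i < (stData hsl hP x N n).2,
      (stData hsl hP x N n).1 α i ≠ (stData hsl hP x N n).1 β i) := by
  simp only [stData]
  rw [dif_pos hx]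
  exact ⟨(step hsl hP hx N n).choose_spec.1,
    (step hsl hP hx N n).choose_spec.2.choose_spec.1,
    (step hsl hP hx N n).choose_spec.2.choose_spec.2⟩

def D (hsl : ∀ c < kappa.{u}, 2 ^ c < kappa.{u}) {P : Set X.{u}}
    (hP : IsKappaPerfect kappa.{u} P) :
    ℕ → (∀ n, S.{u} n) → X.{u} × ℕ
  | 0, _ => (hP.1.choose, 0)
  | (n+1), b =>
    ((stData hsl hP (D hsl hP n b).1 (D hsl hP n b).2 n).1 (b n),
     (stData hsl hP (D hsl hP n b).1 (D hsl hP n b).2 n).2)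

variable (hsl : ∀ c < kappa.{u}, 2 ^ c < kappa.{u}) {P : Set X.{u}} (hP : IsKappaPerfect kappa.{u} P)

lemma D_mem : ∀ (n : ℕ) (b : ∀ n, S.{u} n), (D hsl hP n b).1 ∈ P := by
  intro n
  induction n with
  | zero => intro b; exact hP.1.choose_spec
  | succ n ih =>
    intro b
    exact ((stData_spec hsl hP (ih b) (D hsl hP n b).2 n).2.1 (b n)).1

lemma N_lt (n : ℕ) (b : ∀ n, S.{u} n) : (D hsl hP n b).2 < (D hsl hP (n+1) b).2 :=
  (stData_spec hsl hP (D_mem hsl hP n b) (D hsl hP n b).2 n).1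

lemma agree_succ (n : ℕ) (b : ∀ n, S.{u} n) :
    ∀ i < (D hsl hP n b).2, (D hsl hP (n+1) b).1 i = (D hsl hP n b).1 i :=
  ((stData_spec hsl hP (D_mem hsl hP n b) (D hsl hP n b).2 n).2.1 (b n)).2

lemma le_N (n : ℕ) (b : ∀ n, S.{u} n) : n ≤ (D hsl hP n b).2 := by
  induction n with
  | zero => exact Nat.zero_le _
  | succ n ih => exact Nat.succ_le_of_lt (lt_of_le_of_lt ih (N_lt hsl hP n b))

lemma N_mono {k k' : ℕ} (h : k ≤ k') (b : ∀ n, S.{u} n) :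
    (D hsl hP k b).2 ≤ (D hsl hP k' b).2 := by
  induction h with
  | refl => exact le_rfl
  | @step k' h ih => exact ih.trans (N_lt hsl hP k' b).le

lemma agree {k k' : ℕ} (h : k ≤ k') (b : ∀ n, S.{u} n) :
    ∀ i < (D hsl hP k b).2, (D hsl hP k' b).1 i = (D hsl hP k b).1 i := by
  induction h with
  | refl => exact fun i _ => rfl
  | @step k' h ih =>
    intro i hi
    rw [agree_succ hsl hP k' b i (lt_of_lt_of_le hi (N_mono hsl hP h b))]
    exact ih i hi

lemma D_dep : ∀ (n : ℕ) (b b' : ∀ n, S.{u} n), (∀ i < n, b i = b' i) →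
    D hsl hP n b = D hsl hP n b' := by
  intro n
  induction n with
  | zero => intro b b' _; rfl
  | succ n ih =>
    intro b b' hpre
    have hD : D hsl hP n b = D hsl hP n b' := ih b b' (fun i hi => hpre i (Nat.lt_succ_of_lt hi))
    show ((stData hsl hP (D hsl hP n b).1 (D hsl hP n b).2 n).1 (b n),
      (stData hsl hP (D hsl hP n b).1 (D hsl hP n b).2 n).2) = _
    rw [hD, hpre n (Nat.lt_succ_self n)]
    rfl

lemma D_split (n : ℕ) (b b' : ∀ n, S.{u} n) (hpre : ∀ i < n, b i = b' i) (hne : b n ≠ b' n) :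
    (D hsl hP (n+1) b).2 = (D hsl hP (n+1) b').2 ∧
    ∃ i < (D hsl hP (n+1) b).2, (D hsl hP (n+1) b).1 i ≠ (D hsl hP (n+1) b').1 i := by
  have hD : D hsl hP n b = D hsl hP n b' := D_dep hsl hP n b b' hpre
  show ((stData hsl hP (D hsl hP n b).1 (D hsl hP n b).2 n).2 =
      (stData hsl hP (D hsl hP n b').1 (D hsl hP n b').2 n).2) ∧ _
  constructor
  · rw [hD]
  · show ∃ i < (stData hsl hP (D hsl hP n b).1 (D hsl hP n b).2 n).2,
      (stData hsl hP (D hsl hP n b).1 (D hsl hP n b).2 n).1 (b n) i ≠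
      (stData hsl hP (D hsl hP n b').1 (D hsl hP n b').2 n).1 (b' n) i
    rw [← hD]
    exact (stData_spec hsl hP (D_mem hsl hP n b) (D hsl hP n b).2 n).2.2 (b n) (b' n) hne

def ybr (b : ∀ n, S.{u} n) : X.{u} := fun i => (D hsl hP (i+1) b).1 i

lemma ybr_agree (k : ℕ) (b : ∀ n, S.{u} n) :
    ∀ i < (D hsl hP k b).2, ybr hsl hP b i = (D hsl hP k b).1 i := by
  intro i hi
  have h1 : i < (D hsl hP (i+1) b).2 := lt_of_lt_of_le (Nat.lt_succ_self i) (le_N hsl hP (i+1) b)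
  have e1 := agree hsl hP (le_max_left (i+1) k) b i h1
  have e2 := agree hsl hP (le_max_right (i+1) k) b i hi
  show (D hsl hP (i+1) b).1 i = (D hsl hP k b).1 i
  rw [← e1, e2]

lemma ybr_mem (b : ∀ n, S.{u} n) : ybr hsl hP b ∈ P := by
  apply hP.2.1.closure_subset
  rw [mem_closure_iff_cyl]
  intro n
  exact ⟨(D hsl hP n b).1, D_mem hsl hP n b, fun i hi =>
    (ybr_agree hsl hP n b i (lt_of_lt_of_le hi (le_N hsl hP n b))).symm⟩

lemma ybr_inj : Function.Injective (ybr hsl hP) := by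
  intro b b' h
  by_contra hne
  have hex : ∃ k, b k ≠ b' k := by
    by_contra h'
    push_neg at h'
    exact hne (funext h')
  set k := Nat.find hex with hk
  have hpre : ∀ i < k, b i = b' i := fun i hi => not_not.1 (Nat.find_min hex hi)
  obtain ⟨hN, i, hiM, hdiff⟩ := D_split hsl hP k b b' hpre (Nat.find_spec hex)
  apply hdiff
  rw [← ybr_agree hsl hP (k+1) b i hiM, ← ybr_agree hsl hP (k+1) b' i (hN ▸ hiM), h]

include hsl hP in
theorem perfect_gt : kappa.{u} < #P := by
  have hinj : #(∀ n, S.{u} n) ≤ #P :=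
    mk_le_of_injective (f := fun b => (⟨ybr hsl hP b, ybr_mem hsl hP b⟩ : P))
      (fun b b' hbb => ybr_inj hsl hP (congrArg Subtype.val hbb))
  refine lt_of_lt_of_le ?_ hinj
  rw [mk_pi]
  have h1 : kappa.{u} ≤ Cardinal.sum (fun n : ℕ => Cardinal.aleph.{u} (n : Ordinal)) := by
    rw [show kappa.{u} = Cardinal.aleph.{u} Ordinal.omega0 from rfl,
      aleph_limit Ordinal.isSuccLimit_omega0]
    apply ciSup_le'
    intro a
    rcases Ordinal.lt_omega0.1 a.2 with ⟨n, hn⟩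
    calc Cardinal.aleph.{u} a.1 = Cardinal.aleph.{u} (n : Ordinal) := by rw [hn]
      _ ≤ _ := le_sum _ n
  refine lt_of_le_of_lt h1 ?_
  refine lt_of_lt_of_le (sum_lt_prod (fun n : ℕ => Cardinal.aleph.{u} (n : Ordinal))
    (fun n : ℕ => Cardinal.aleph.{u} ((n : Ordinal) + 1)) (fun n => aleph_lt_aleph.2 ?_)) ?_
  · exact lt_of_lt_of_le (Order.lt_succ _) (by rw [Ordinal.add_one_eq_succ])
  · apply le_of_eq
    congr 1
    funext n
    exact (mk_S n).symm

end SCHAux3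

namespace SCHAux2
variable {T : Type*} [TopologicalSpace T] [DiscreteTopology T]

def closedCode (C : Set (ℕ → T)) : ∀ n : ℕ, Set (Fin n → T) :=
  fun n => (fun p (i : Fin n) => p i) '' C

lemma closed_char {C : Set (ℕ → T)} (hC : IsClosed C) {y : ℕ → T} :
    y ∈ C ↔ ∀ n, (fun i : Fin n => y i) ∈ closedCode C n := by
  constructor
  · intro hy n; exact ⟨y, hy, rfl⟩
  · intro h
    rw [← hC.closure_eq]
    rw [SCHAux.mem_closure_iff_cyl]
    intro n
    rcases h n with ⟨p, hpC, hp⟩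
    refine ⟨p, hpC, fun i hi => ?_⟩
    exact congrFun hp ⟨i, hi⟩

lemma mk_closeds_le {μ : Cardinal} (hT : #T ≤ μ) (hμ : ℵ₀ ≤ μ) :
    #{C : Set (ℕ → T) // IsClosed C} ≤ 2 ^ μ := by
  have hinj : Function.Injective (fun C : {C : Set (ℕ → T) // IsClosed C} => closedCode C.1) := by
    intro C D h
    ext y
    rw [closed_char C.2, closed_char D.2, show closedCode C.1 = closedCode D.1 from h]
  calc #{C : Set (ℕ → T) // IsClosed C} ≤ #(∀ n : ℕ, Set (Fin n → T)) := mk_le_of_injective hinj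
    _ = prod (fun n : ℕ => #(Set (Fin n → T))) := mk_pi _
    _ ≤ prod (fun _ : ℕ => 2 ^ μ) := by
        apply prod_le_prod
        intro n
        rw [mk_set]
        apply power_le_power_left (by norm_num)
        calc #(Fin n → T) = #T ^ (n : Cardinal) := by
              rw [mk_arrow, mk_fin]; simp
          _ ≤ μ ^ (n : Cardinal) := power_le_power_right hT
          _ ≤ μ := by rw [power_natCast]; exact power_nat_le hμ
    _ = (2 ^ μ) ^ (ℵ₀ : Cardinal) := by rw [prod_const]; simp
    _ = 2 ^ μ := by rw [← power_mul, mul_aleph0_eq hμ]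
end SCHAux2



namespace SCHAux4
universe u
variable {α : Type u} [Nonempty α]

abbrev I (c : Cardinal.{u}) : Type u := c.ord.ToType

open Classical in
def pick (s : Set α) : α := if h : s.Nonempty then h.choose else Classical.arbitrary α

lemma pick_mem {s : Set α} (h : s.Nonempty) : pick s ∈ s := by
  rw [pick]; rw [dif_pos h]; exact h.choose_spec

variable (c : Cardinal.{u}) (F : I c → Set α)

def bern : I c → α × α :=
  (wellFounded_lt).fix fun i ih =>
    let B : Set α := {x | ∃ j, ∃ _h : j < i, x = (ih j ‹_›).1 ∨ x = (ih j ‹_›).2}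
    let a := pick (F i \ B)
    (a, pick (F i \ (B ∪ {a})))

def prevSet (i : I c) : Set α :=
  {x | ∃ j, ∃ _h : j < i, x = (bern c F j).1 ∨ x = (bern c F j).2}

lemma bern_eq (i : I c) :
    bern c F i = (pick (F i \ prevSet c F i),
      pick (F i \ (prevSet c F i ∪ {pick (F i \ prevSet c F i)}))) := by
  show WellFounded.fix _ _ _ = _
  rw [WellFounded.fix_eq]
  rfl

variable {κ : Cardinal.{u}} (hκ : ℵ₀ ≤ κ) (hc : c = Order.succ κ)
  (hF : ∀ i, Order.succ κ ≤ #(F i))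

include hκ hc in
lemma prevSet_small (i : I c) : #(prevSet c F i) < c := by
  subst hc
  have h1 : prevSet _ F i ⊆
      (range fun j : Iio i => (bern _ F j.1).1) ∪ (range fun j : Iio i => (bern _ F j.1).2) := by
    rintro x ⟨j, hj, h | h⟩
    · exact Or.inl ⟨⟨j, hj⟩, h.symm⟩
    · exact Or.inr ⟨⟨j, hj⟩, h.symm⟩
  have h2 : #(prevSet _ F i) ≤ #(Iio i) + #(Iio i) :=
    (mk_le_mk_of_subset h1).trans (le_trans (mk_union_le _ _) (add_le_add mk_range_le mk_range_le))
  have h3 : #(Iio i) < Order.succ κ := mk_Iio_ord_toType i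
  have h4 : #(Iio i) ≤ κ := Order.lt_succ_iff.1 h3
  calc #(prevSet _ F i) ≤ #(Iio i) + #(Iio i) := h2
    _ ≤ κ + κ := add_le_add h4 h4
    _ = κ := add_eq_self hκ
    _ < Order.succ κ := Order.lt_succ κ

include hκ hc hF in
lemma bern_fst (i : I c) : (bern c F i).1 ∈ F i \ prevSet c F i := by
  rw [bern_eq]
  apply pick_mem
  rw [Set.diff_nonempty]
  intro hsub
  have := (mk_le_mk_of_subset hsub).trans_lt (prevSet_small c F hκ hc i)
  rw [hc] at this
  exact absurd (hF i) (not_le.2 this)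

include hκ hc hF in
lemma bern_snd (i : I c) : (bern c F i).2 ∈ F i \ (prevSet c F i ∪ {(bern c F i).1}) := by
  subst hc
  have h1 : (bern _ F i).2 = pick (F i \ (prevSet _ F i ∪ {pick (F i \ prevSet _ F i)})) := by
    rw [bern_eq]
  have h2 : (bern _ F i).1 = pick (F i \ prevSet _ F i) := by rw [bern_eq]
  rw [h1, ← h2]
  apply pick_mem
  rw [Set.diff_nonempty]
  intro hsub
  have hcard : #(↥(prevSet _ F i ∪ {(bern _ F i).1})) < Order.succ κ := by
    refine lt_of_le_of_lt (le_trans (mk_union_le _ _) (add_le_add le_rfl (mk_singleton _).le)) ?_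
    have h3 := prevSet_small _ F hκ rfl i
    have h4 : #(prevSet _ F i) ≤ κ := Order.lt_succ_iff.1 h3
    calc #(prevSet _ F i) + 1 ≤ κ + κ := add_le_add h4 (one_le_aleph0.trans hκ)
      _ = κ := add_eq_self hκ
      _ < Order.succ κ := Order.lt_succ κ
  have := (mk_le_mk_of_subset hsub).trans_lt hcard
  exact absurd (hF i) (not_le.2 this)

include hκ hc hF in
lemma bern_fst_inj : Function.Injective fun i => (bern c F i).1 := by
  intro i j hij
  have hij' : (bern c F i).1 = (bern c F j).1 := hij
  by_contra hne
  wlog hlt : j < i generalizing i j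
  · exact this hij.symm hij'.symm (Ne.symm hne) ((Ne.lt_or_gt hne).resolve_right hlt)
  exact (bern_fst c F hκ hc hF i).2 ⟨j, hlt, Or.inl hij'⟩

include hκ hc hF in
lemma bern_snd_not_mem (i : I c) : (bern c F i).2 ∉ range fun j => (bern c F j).1 := by
  rintro ⟨j, hj⟩
  have hj' : (bern c F j).1 = (bern c F i).2 := hj
  rcases lt_trichotomy j i with h | h | h
  · exact (bern_snd c F hκ hc hF i).2 (Or.inl ⟨j, h, Or.inl hj'.symm⟩)
  · subst h
    exact (bern_snd c F hκ hc hF j).2 (Or.inr (mem_singleton_iff.2 hj'.symm))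
  · exact (bern_fst c F hκ hc hF j).2 ⟨i, h, Or.inr hj'⟩

end SCHAux4


open SCHAux3 SCHAux4 Ordinal in
theorem sch_aux.{u}
    (hsl : ∀ c < Cardinal.aleph.{u} Ordinal.omega0, 2 ^ c < Cardinal.aleph.{u} Ordinal.omega0)
    (hpsp : ∀ A : Set (ℕ → (Cardinal.aleph.{u} Ordinal.omega0).ord.ToType),
      HasKappaPSP (Cardinal.aleph.{u} Ordinal.omega0) A) :
    2 ^ Cardinal.aleph.{u} Ordinal.omega0 ≠ Order.succ (Cardinal.aleph.{u} Ordinal.omega0) := by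
  intro h2
  classical
  have hT : #(SCHAux3.T.{u}) = Cardinal.aleph.{u} Ordinal.omega0 := by
    rw [Cardinal.mk_toType, card_ord]
  have hκ0 : ℵ₀ ≤ Cardinal.aleph.{u} Ordinal.omega0 := aleph0_le_aleph _
  -- the whole space has cardinality > ℵ_ω
  have hXgt : Cardinal.aleph.{u} Ordinal.omega0 < #(SCHAux3.X.{u}) := by
    have harrow : #(SCHAux3.X.{u}) = Cardinal.aleph.{u} Ordinal.omega0 ^ (ℵ₀ : Cardinal) := by
      rw [show #(SCHAux3.X.{u}) = #(ℕ → SCHAux3.T.{u}) from rfl, mk_arrow]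
      simp [hT, mk_nat]
    have hcof : (Cardinal.aleph.{u} Ordinal.omega0).ord.cof = ℵ₀ := by
      simp [Ordinal.isSuccLimit_omega0, Ordinal.cof_omega0]
    have := lt_power_cof hκ0
    rw [hcof] at this
    rw [harrow]
    exact this
  -- the collection of perfect sets is nonempty
  have hne : Nonempty {P : Set SCHAux3.X.{u} // IsKappaPerfect (Cardinal.aleph.{u} Ordinal.omega0) P} := by
    rcases hpsp univ with h | ⟨P, _, hP⟩
    · rw [mk_univ] at h
      exact absurd h (not_le.2 hXgt)
    · exact ⟨⟨P, hP⟩⟩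
  -- there are at most 2^{ℵ_ω} = ℵ_{ω+1} perfect sets
  have hcount : #{P : Set SCHAux3.X.{u} // IsKappaPerfect (Cardinal.aleph.{u} Ordinal.omega0) P} ≤
      Order.succ (Cardinal.aleph.{u} Ordinal.omega0) := by
    rw [← h2]
    refine le_trans (mk_le_of_injective
      (f := fun P : {P : Set SCHAux3.X.{u} // IsKappaPerfect (Cardinal.aleph.{u} Ordinal.omega0) P} =>
        (⟨P.1, P.2.2.1⟩ : {C : Set (ℕ → SCHAux3.T.{u}) // IsClosed C})) ?_) ?_
    · intro P Q h
      simp only [Subtype.mk.injEq] at h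
      exact Subtype.ext h
    · exact SCHAux2.mk_closeds_le hT.le hκ0
  have hI : #(SCHAux4.I (Order.succ (Cardinal.aleph.{u} Ordinal.omega0))) =
      Order.succ (Cardinal.aleph.{u} Ordinal.omega0) := by
    rw [Cardinal.mk_toType, card_ord]
  haveI : Nonempty SCHAux3.T.{u} := by
    rw [Ordinal.nonempty_toType_iff]
    intro h
    have := congrArg Ordinal.card h
    rw [card_ord] at this
    simp only [Ordinal.card_zero] at this
    exact (aleph_pos Ordinal.omega0).ne' this
  haveI : Nonempty SCHAux3.X.{u} := ⟨fun _ => Classical.arbitrary _⟩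
  haveI := hne
  obtain ⟨e⟩ := Cardinal.le_def _ _ |>.1 (hcount.trans_eq hI.symm)
  set F := Function.invFun e with hF
  have hFsurj : Function.Surjective F := Function.invFun_surjective e.injective
  set G : SCHAux4.I (Order.succ (Cardinal.aleph.{u} Ordinal.omega0)) → Set SCHAux3.X.{u} :=
    fun i => (F i).1 with hGdef
  have hG : ∀ i, IsKappaPerfect (Cardinal.aleph.{u} Ordinal.omega0) (G i) := fun i => (F i).2
  have hGbig : ∀ i, Order.succ (Cardinal.aleph.{u} Ordinal.omega0) ≤ #(G i) :=
    fun i => Order.succ_le_of_lt (SCHAux3.perfect_gt hsl (hG i))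
  set A : Set SCHAux3.X.{u} :=
    range fun i => (SCHAux4.bern (Order.succ (Cardinal.aleph.{u} Ordinal.omega0)) G i).1 with hAdef
  have hA : #A = Order.succ (Cardinal.aleph.{u} Ordinal.omega0) := by
    rw [hAdef, mk_range_eq _ (SCHAux4.bern_fst_inj _ G hκ0 rfl hGbig), hI]
  rcases hpsp A with h | ⟨P, hPA, hP⟩
  · rw [hA] at h
    exact absurd h (not_le.2 (Order.lt_succ _))
  · obtain ⟨i, hi⟩ := hFsurj ⟨P, hP⟩
    have hPG : G i = P := congrArg Subtype.val hi
    have h1 := SCHAux4.bern_snd (Order.succ (Cardinal.aleph.{u} Ordinal.omega0)) G hκ0 rfl hGbig i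
    have h2 : (SCHAux4.bern (Order.succ (Cardinal.aleph.{u} Ordinal.omega0)) G i).2 ∈ A :=
      hPA (hPG ▸ h1.1)
    exact SCHAux4.bern_snd_not_mem _ G hκ0 rfl hGbig i h2

lemma lift_aleph_omega0.{a, b} :
    Cardinal.lift.{b} (Cardinal.aleph.{a} Ordinal.omega0) =
      Cardinal.aleph.{max a b} Ordinal.omega0 := by
  rw [Cardinal.lift_aleph, Ordinal.lift_omega0]

lemma hsl_up.{a, b}
    (h : ∀ c < Cardinal.aleph.{a} Ordinal.omega0, 2 ^ c < Cardinal.aleph.{a} Ordinal.omega0) :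
    ∀ c < Cardinal.aleph.{max a b} Ordinal.omega0,
      2 ^ c < Cardinal.aleph.{max a b} Ordinal.omega0 := by
  intro c hc
  have hc' : c < Cardinal.lift.{b} (Cardinal.aleph.{a} Ordinal.omega0) := by
    rw [lift_aleph_omega0]; exact hc
  rcases Cardinal.mem_range_lift_of_le hc'.le with ⟨c0, rfl⟩
  rw [← Cardinal.lift_two_power, ← lift_aleph_omega0.{a, b}]
  rw [Cardinal.lift_lt] at hc' ⊢
  exact h c0 hc'

lemma hsl_transfer.{a, b}
    (h : ∀ c < Cardinal.aleph.{a} Ordinal.omega0, 2 ^ c < Cardinal.aleph.{a} Ordinal.omega0) :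
    ∀ c < Cardinal.aleph.{b} Ordinal.omega0, 2 ^ c < Cardinal.aleph.{b} Ordinal.omega0 := by
  intro c hc
  have h1 : Cardinal.lift.{a} c < Cardinal.aleph.{max a b} Ordinal.omega0 := by
    rw [← lift_aleph_omega0.{b, a}]
    exact Cardinal.lift_lt.2 hc
  have h2 := hsl_up.{a, b} h _ h1
  rw [← Cardinal.lift_two_power, ← lift_aleph_omega0.{b, a}, Cardinal.lift_lt] at h2
  exact h2

lemma eq_transfer.{a, b}
    (h : 2 ^ Cardinal.aleph.{a} Ordinal.omega0 = Order.succ (Cardinal.aleph.{a} Ordinal.omega0)) :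
    2 ^ Cardinal.aleph.{b} Ordinal.omega0 = Order.succ (Cardinal.aleph.{b} Ordinal.omega0) := by
  apply Cardinal.lift_injective.{a, b}
  rw [Cardinal.lift_two_power, Cardinal.lift_succ, lift_aleph_omega0.{b, a}]
  have := congrArg (Cardinal.lift.{b}) h
  rw [Cardinal.lift_two_power, Cardinal.lift_succ, lift_aleph_omega0.{a, b}] at this
  exact this

/-- If ℵ_ω is a strong limit cardinal and every subset of the generalized Baire space
(ℵ_ω)^ω has the ℵ_ω-PSP, then SCH fails at ℵ_ω, i.e. 2^{ℵ_ω} ≠ ℵ_{ω+1}. -/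
theorem sch_fails_at_aleph_omega
    (hsl : ∀ c < Cardinal.aleph Ordinal.omega0, 2 ^ c < Cardinal.aleph Ordinal.omega0)
    (hpsp : ∀ A : Set (ℕ → (Cardinal.aleph Ordinal.omega0).ord.ToType),
      HasKappaPSP (Cardinal.aleph Ordinal.omega0) A) :
    2 ^ Cardinal.aleph Ordinal.omega0 ≠ Order.succ (Cardinal.aleph Ordinal.omega0) := by
  intro h2
  exact sch_aux (hsl_transfer hsl) hpsp (eq_transfer h2)
end
end

section
/- Assume ℵ_ω is a strong limit cardinal and every subset A of the generalized Baire space (ℵ_ω)^ω has the ℵ_ω-PSP. Then for every strictly increasing sequence ⟨δ_n : n < ω⟩ of infinite cardinals below ℵ_ω with supremum ℵ_ω there is no scale on Π_{n<ω} δ_n; that is, there is no sequence ⟨f_β : β < ℵ_{ω+1}⟩ of elements of Π_{n<ω} δ_n that is <*-increasing and <*-cofinal. (Proposition 3.4(2).) -/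
noncomputable section
open Cardinal Set

/-- `f <* g`: eventual domination, i.e. `f n < g n` for all but finitely many `n`. -/
def EvLT {o : Ordinal} (f g : ℕ → o.ToType) : Prop :=
  ∃ m : ℕ, ∀ n ≥ m, f n < g n

instance (o : Ordinal) : IsWellOrder o.ToType (· < ·) := isWellOrder_lt

/-- The basic cylinder around `x` of length `n`. -/
def cyl {o : Ordinal} (x : ℕ → o.ToType) (n : ℕ) : Set (ℕ → o.ToType) :=
  {y | ∀ k < n, y k = x k}

lemma mem_cyl_self {o : Ordinal} (x : ℕ → o.ToType) (n : ℕ) : x ∈ cyl x n :=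
  fun _ _ => rfl

lemma cyl_mono {o : Ordinal} (x : ℕ → o.ToType) {m n : ℕ} (h : m ≤ n) :
    cyl x n ⊆ cyl x m := fun y hy k hk => hy k (lt_of_lt_of_le hk h)

lemma isOpen_cyl {o : Ordinal} (x : ℕ → o.ToType) (n : ℕ) : IsOpen (cyl x n) := by
  have : cyl x n = Set.pi (↑(Finset.range n) : Set ℕ) (fun k => {x k}) := by
    ext y
    simp [cyl, Set.mem_pi]
  rw [this]
  exact isOpen_set_pi (Finset.range n).finite_toSet (fun a _ => isOpen_discrete _)

lemma evLT_irrefl {o : Ordinal} (g : ℕ → o.ToType) : ¬ EvLT g g := by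
  rintro ⟨m, hm⟩
  exact lt_irrefl _ (hm m le_rfl)

lemma evLT_asymm {o : Ordinal} {g h : ℕ → o.ToType} (h1 : EvLT g h) (h2 : EvLT h g) :
    False := by
  obtain ⟨m1, hm1⟩ := h1
  obtain ⟨m2, hm2⟩ := h2
  exact lt_asymm (hm1 (max m1 m2) (le_max_left _ _)) (hm2 (max m1 m2) (le_max_right _ _))

/-- The core combinatorial lemma: inside a family `P` of pairwise `EvLT`-comparable
functions there is no closed subset `Q`-style configuration which is "nowhere stuck". -/
lemma main_aux {o : Ordinal} (P Q : Set (ℕ → o.ToType))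
    (hPc : IsClosed P) (hQP : Q ⊆ P)
    (hcomp : ∀ p ∈ P, ∀ q ∈ P, p = q ∨ EvLT p q ∨ EvLT q p)
    (h2 : ∃ a ∈ Q, ∃ b ∈ Q, a ≠ b)
    (hns : ∀ v ∈ Q, ∀ x ∈ Q, ∀ n N : ℕ, ∃ u ∈ Q ∩ cyl x n, ∃ c, N ≤ c ∧ v c ≤ u c) :
    False := by
  classical
  obtain ⟨a, ha, b, hb, hab⟩ := h2
  obtain ⟨d, hd⟩ := Function.ne_iff.mp hab
  -- the step
  set St := ((ℕ → o.ToType) × (ℕ → o.ToType) × ℕ)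
  set Rel : St → St → Prop := fun s t =>
    (∀ k < s.2.2, t.1 k = s.1 k) ∧ (∀ k < s.2.2, t.2.1 k = s.2.1 k) ∧ s.2.2 < t.2.2 ∧
    (∃ c, s.2.2 ≤ c ∧ c < t.2.2 ∧ t.2.1 c ≤ t.1 c) ∧
    (∃ c, s.2.2 ≤ c ∧ c < t.2.2 ∧ t.1 c ≤ t.2.1 c) with hRel
  have key : ∀ s : {p : St // p.1 ∈ Q ∧ p.2.1 ∈ Q},
      ∃ t : {p : St // p.1 ∈ Q ∧ p.2.1 ∈ Q}, Rel s.1 t.1 := by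
    rintro ⟨⟨u, v, n⟩, hu, hv⟩
    obtain ⟨u', ⟨hu'Q, hu'c⟩, c, hcn, hcle⟩ := hns v hv u hu n n
    obtain ⟨v', ⟨hv'Q, hv'c⟩, c', hc'c, hc'le⟩ := hns u' hu'Q v hv (c + 1) (c + 1)
    refine ⟨⟨⟨u', v', c' + 1⟩, hu'Q, hv'Q⟩, ?_, ?_, ?_, ?_, ?_⟩
    · exact fun k hk => hu'c k hk
    · exact fun k hk => hv'c k (lt_of_lt_of_le hk (le_trans (Nat.le_succ_of_le hcn) le_rfl))
    · exact lt_of_le_of_lt hcn (lt_of_lt_of_le (Nat.lt_succ_self c) (le_trans hc'c (Nat.le_succ c')))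
    · refine ⟨c, hcn, ?_, ?_⟩
      · exact lt_of_lt_of_le (Nat.lt_succ_of_lt (Nat.lt_of_succ_le hc'c)) le_rfl
      · have h5 : v' c = v c := hv'c c (Nat.lt_succ_self c)
        exact h5.trans_le hcle
    · exact ⟨c', le_trans hcn (Nat.le_of_succ_le hc'c), Nat.lt_succ_self c', hc'le⟩
  -- the recursively constructed sequence
  let S : ℕ → {p : St // p.1 ∈ Q ∧ p.2.1 ∈ Q} :=
    fun i => Nat.rec ⟨⟨a, b, d + 1⟩, ha, hb⟩ (fun _ s => (key s).choose) i
  have hS : ∀ i, Rel (S i).1 (S (i + 1)).1 := fun i => (key (S i)).choose_spec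
  set u : ℕ → (ℕ → o.ToType) := fun i => (S i).1.1 with hu
  set v : ℕ → (ℕ → o.ToType) := fun i => (S i).1.2.1 with hv
  set nn : ℕ → ℕ := fun i => (S i).1.2.2 with hnn
  have hnmono : StrictMono nn := strictMono_nat_of_lt_succ (fun i => (hS i).2.2.1)
  have hstab_u : ∀ i j, i ≤ j → ∀ k < nn i, u j k = u i k := by
    intro i j hij
    induction j, hij using Nat.le_induction with
    | base => intro k _; rfl
    | succ j hij ih =>
      intro k hk
      have h1 : u (j + 1) k = u j k := (hS j).1 k (lt_of_lt_of_le hk (hnmono.monotone hij))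
      rw [h1, ih k hk]
  have hstab_v : ∀ i j, i ≤ j → ∀ k < nn i, v j k = v i k := by
    intro i j hij
    induction j, hij using Nat.le_induction with
    | base => intro k _; rfl
    | succ j hij ih =>
      intro k hk
      have h1 : v (j + 1) k = v j k := (hS j).2.1 k (lt_of_lt_of_le hk (hnmono.monotone hij))
      rw [h1, ih k hk]
  have hii : ∀ i, i < nn i := by
    intro i
    induction i with
    | zero => exact Nat.succ_pos d
    | succ i ih => exact Nat.lt_of_le_of_lt ih ((hS i).2.2.1)
  set U : ℕ → o.ToType := fun k => u k k with hU
  set V : ℕ → o.ToType := fun k => v k k with hV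
  have hUa : ∀ i k, k < nn i → U k = u i k := by
    intro i k hk
    rcases le_total k i with h | h
    · exact (hstab_u k i h k (hii k)).symm
    · exact hstab_u i k h k hk
  have hVa : ∀ i k, k < nn i → V k = v i k := by
    intro i k hk
    rcases le_total k i with h | h
    · exact (hstab_v k i h k (hii k)).symm
    · exact hstab_v i k h k hk
  have htendU : Filter.Tendsto u Filter.atTop (nhds U) := by
    rw [tendsto_pi_nhds]
    intro k
    apply tendsto_const_nhds.congr'
    filter_upwards [Filter.eventually_ge_atTop k] with i hik
    exact hUa i k (lt_of_lt_of_le (hii k) (hnmono.monotone hik))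
  have htendV : Filter.Tendsto v Filter.atTop (nhds V) := by
    rw [tendsto_pi_nhds]
    intro k
    apply tendsto_const_nhds.congr'
    filter_upwards [Filter.eventually_ge_atTop k] with i hik
    exact hVa i k (lt_of_lt_of_le (hii k) (hnmono.monotone hik))
  have hUP : U ∈ P :=
    hPc.mem_of_tendsto htendU (Filter.Eventually.of_forall (fun i => hQP (S i).2.1))
  have hVP : V ∈ P :=
    hPc.mem_of_tendsto htendV (Filter.Eventually.of_forall (fun i => hQP (S i).2.2))
  have hd0 : d < nn 0 := Nat.lt_succ_self d
  have hUV : U ≠ V := by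
    intro h
    apply hd
    have h1 : U d = u 0 d := hUa 0 d hd0
    have h2 : V d = v 0 d := hVa 0 d hd0
    have : u 0 d = a d := rfl
    have h4 : v 0 d = b d := rfl
    rw [← this, ← h4, ← h1, ← h2, h]
  have hnotUV : ¬ EvLT U V := by
    rintro ⟨m, hm⟩
    obtain ⟨c, hc1, hc2, hc3⟩ := (hS m).2.2.2.1
    have hUc : U c = u (m + 1) c := hUa (m + 1) c hc2
    have hVc : V c = v (m + 1) c := hVa (m + 1) c hc2
    have : U c < V c := hm c (le_trans (le_of_lt (hii m)) hc1)
    rw [hUc, hVc] at this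
    exact absurd hc3 (not_le.mpr this)
  have hnotVU : ¬ EvLT V U := by
    rintro ⟨m, hm⟩
    obtain ⟨c, hc1, hc2, hc3⟩ := (hS m).2.2.2.2
    have hUc : U c = u (m + 1) c := hUa (m + 1) c hc2
    have hVc : V c = v (m + 1) c := hVa (m + 1) c hc2
    have : V c < U c := hm c (le_trans (le_of_lt (hii m)) hc1)
    rw [hUc, hVc] at this
    exact absurd hc3 (not_le.mpr this)
  rcases hcomp U hUP V hVP with h | h | h
  · exact hUV h
  · exact hnotUV h
  · exact hnotVU h


/-- Order isomorphism between the order types of `ℵ_ω` computed in two universes. -/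
lemma toType_aleph_relIso.{u, v} :
    Nonempty (((· < ·) : (Cardinal.aleph.{u} Ordinal.omega0).ord.ToType →
        (Cardinal.aleph.{u} Ordinal.omega0).ord.ToType → Prop) ≃r
      ((· < ·) : (Cardinal.aleph.{v} Ordinal.omega0).ord.ToType →
        (Cardinal.aleph.{v} Ordinal.omega0).ord.ToType → Prop)) := by
  refine Ordinal.lift_type_eq.{u, v, 0}.mp ?_
  rw [Ordinal.type_toType, Ordinal.type_toType,
    Cardinal.lift_ord, Cardinal.lift_ord, Cardinal.lift_aleph, Cardinal.lift_aleph,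
    Ordinal.lift_omega0, Ordinal.lift_omega0]

/-- The main argument, with the universes of the PSP hypothesis and of the scale decoupled. -/
lemma outer_aux.{u2, u3, u4}
    (hpsp : ∀ A : Set (ℕ → (Cardinal.aleph.{u2} Ordinal.omega0).ord.ToType),
      HasKappaPSP (Cardinal.aleph.{u2} Ordinal.omega0) A)
    (f : (Order.succ (Cardinal.aleph.{u4} Ordinal.omega0)).ord.ToType →
        (ℕ → (Cardinal.aleph.{u3} Ordinal.omega0).ord.ToType))
    (hinc : ∀ γ β, γ < β → EvLT (f γ) (f β)) : False := by
  classical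
  obtain ⟨e⟩ := toType_aleph_relIso.{u3, u2}
  set F : (Order.succ (Cardinal.aleph.{u4} Ordinal.omega0)).ord.ToType →
      (ℕ → (Cardinal.aleph.{u2} Ordinal.omega0).ord.ToType) :=
    fun β n => e (f β n) with hF
  have hFinc : ∀ γ β, γ < β → EvLT (F γ) (F β) := by
    intro γ β h
    obtain ⟨m, hm⟩ := hinc γ β h
    exact ⟨m, fun n hn => e.map_rel_iff.mpr (hm n hn)⟩
  have hFinj : Function.Injective F := by
    intro γ β h
    rcases lt_trichotomy γ β with h1 | h1 | h1
    · exact absurd (h ▸ hFinc γ β h1) (evLT_irrefl (F β))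
    · exact h1
    · exact absurd (h ▸ hFinc β γ h1) (evLT_irrefl (F β))
  rcases hpsp (range F) with hle | ⟨P, hPA, hPne, hPc, hperf⟩
  · have h1 := Cardinal.mk_range_eq_of_injective hFinj
    rw [Cardinal.mk_toType, Cardinal.card_ord, Cardinal.lift_succ, Cardinal.lift_aleph,
      Ordinal.lift_omega0] at h1
    have h2 := Cardinal.lift_le.{u4}.mpr hle
    rw [h1, Cardinal.lift_aleph, Ordinal.lift_omega0] at h2
    exact absurd h2 (not_le.mpr (Order.lt_succ _))
  -- comparability of elements of P
  · have hcomp : ∀ p ∈ P, ∀ q ∈ P, p = q ∨ EvLT p q ∨ EvLT q p := by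
      intro p hp q hq
      obtain ⟨γ, hγ⟩ := hPA hp
      obtain ⟨β, hβ⟩ := hPA hq
      rcases lt_trichotomy γ β with h1 | h1 | h1
      · exact Or.inr (Or.inl (hγ ▸ hβ ▸ hFinc γ β h1))
      · exact Or.inl (hγ ▸ hβ ▸ congrArg F h1)
      · exact Or.inr (Or.inr (hγ ▸ hβ ▸ hFinc β γ h1))
    -- two distinct elements in any cylinder piece of P
    have htwo : ∀ x ∈ P, ∀ n : ℕ, ∃ a ∈ P ∩ cyl x n, ∃ b ∈ P ∩ cyl x n, a ≠ b := by
      intro x hx n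
      have hcard2 : Cardinal.aleph Ordinal.omega0 ≤ #(P ∩ cyl x n : Set _) :=
        hperf x hx (cyl x n) (isOpen_cyl x n) (mem_cyl_self x n)
      have h1 : (1 : Cardinal) < #(P ∩ cyl x n : Set _) :=
        lt_of_lt_of_le (lt_of_lt_of_le one_lt_aleph0 (aleph0_le_aleph _)) hcard2
      obtain ⟨p, q, hpq⟩ := (Cardinal.one_lt_iff_nontrivial.mp h1).exists_pair_ne
      exact ⟨p.1, p.2, q.1, q.2, fun h => hpq (Subtype.ext h)⟩
    -- the notion of a "stuck" index
    set Stuck : (Order.succ (Cardinal.aleph.{u4} Ordinal.omega0)).ord.ToType → Prop := fun β =>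
      F β ∈ P ∧ ∃ x ∈ P, ∃ n N : ℕ, ∀ u ∈ P ∩ cyl x n, ∀ c, N ≤ c → u c < F β c
      with hStuck
    have hwf : WellFounded ((· < ·) :
        (Order.succ (Cardinal.aleph.{u4} Ordinal.omega0)).ord.ToType →
        (Order.succ (Cardinal.aleph.{u4} Ordinal.omega0)).ord.ToType → Prop) :=
      IsWellFounded.wf
    have hunstuck : ∀ β, F β ∈ P → ¬ Stuck β →
        ∀ x ∈ P, ∀ n N : ℕ, ∃ u ∈ P ∩ cyl x n, ∃ c, N ≤ c ∧ F β c ≤ u c := by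
      intro β hβP hβ x hx n N
      have hβ' : ¬ (F β ∈ P ∧ ∃ x ∈ P, ∃ n N : ℕ,
          ∀ u ∈ P ∩ cyl x n, ∀ c, N ≤ c → u c < F β c) := hβ
      push_neg at hβ'
      obtain ⟨u, hu, c, hc1, hc2⟩ := hβ' hβP x hx n N
      exact ⟨u, hu, c, hc1, hc2⟩
    by_cases hstuck : ∃ β, Stuck β
    · -- Case B: there is a stuck index; take a minimal one
      set W := {β | Stuck β} with hW
      have hWne : W.Nonempty := hstuck
      set β₀ := hwf.min W hWne with hβ₀
      obtain ⟨hβ₀P, x₀, hx₀P, n₀, N₀, hstk⟩ : Stuck β₀ := hwf.min_mem W hWne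
      set Q : Set (ℕ → (Cardinal.aleph.{u2} Ordinal.omega0).ord.ToType) := P ∩ cyl x₀ n₀ with hQ
      have hQP : Q ⊆ P := inter_subset_left
      -- every element of Q has index below β₀
      have hidx : ∀ v ∈ Q, ∃ γ, γ < β₀ ∧ F γ = v := by
        intro v hv
        obtain ⟨γ, hγ⟩ := hPA hv.1
        have hev : EvLT v (F β₀) := ⟨N₀, fun c hc => hstk v hv c hc⟩
        refine ⟨γ, ?_, hγ⟩
        rcases lt_trichotomy γ β₀ with h1 | h1 | h1
        · exact h1
        · exact absurd (h1 ▸ hγ ▸ hev) (evLT_irrefl _)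
        · exact absurd (hγ ▸ hFinc β₀ γ h1) (fun h => evLT_asymm hev h)
      have hns : ∀ v ∈ Q, ∀ x ∈ Q, ∀ n N : ℕ,
          ∃ u ∈ Q ∩ cyl x n, ∃ c, N ≤ c ∧ v c ≤ u c := by
        intro v hv x hx n N
        obtain ⟨γ, hγlt, hγ⟩ := hidx v hv
        have hγns : ¬ Stuck γ := fun hs => hwf.not_lt_min W hs hγlt
        obtain ⟨u, hu, c, hc1, hc2⟩ :=
          hunstuck γ (hγ ▸ hv.1) hγns x hx.1 (max n n₀) N
        refine ⟨u, ⟨⟨hu.1, ?_⟩, ?_⟩, c, hc1, hγ ▸ hc2⟩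
        · intro k hk
          rw [hu.2 k (lt_of_lt_of_le hk (le_max_right n n₀))]
          exact hx.2 k hk
        · exact fun k hk => hu.2 k (lt_of_lt_of_le hk (le_max_left n n₀))
      exact main_aux P Q hPc hQP hcomp (htwo x₀ hx₀P n₀) hns
    · -- Case A: no stuck index at all
      push_neg at hstuck
      obtain ⟨x₁, hx₁⟩ := hPne
      have hns : ∀ v ∈ P, ∀ x ∈ P, ∀ n N : ℕ,
          ∃ u ∈ P ∩ cyl x n, ∃ c, N ≤ c ∧ v c ≤ u c := by
        intro v hv x hx n N
        obtain ⟨γ, hγ⟩ := hPA hv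
        obtain ⟨u, hu, c, hc1, hc2⟩ :=
          hunstuck γ (hγ ▸ hv) (hstuck γ) x hx n N
        exact ⟨u, hu, c, hc1, hγ ▸ hc2⟩
      have h2 : ∃ a ∈ P, ∃ b ∈ P, a ≠ b := by
        obtain ⟨a, ha, b, hb, hab⟩ := htwo x₁ hx₁ 0
        exact ⟨a, ha.1, b, hb.1, hab⟩
      exact main_aux P P hPc (fun _ h => h) hcomp h2 hns

/-- If ℵ_ω is a strong limit cardinal and every subset of (ℵ_ω)^ω has the ℵ_ω-PSP, then
for every strictly increasing sequence of infinite cardinals δ_n < ℵ_ω with supremum ℵ_ω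
there is no scale on Π_{n<ω} δ_n of length ℵ_{ω+1}. -/
theorem no_scale_at_aleph_omega
    (hsl : ∀ c < Cardinal.aleph Ordinal.omega0, 2 ^ c < Cardinal.aleph Ordinal.omega0)
    (hpsp : ∀ A : Set (ℕ → (Cardinal.aleph Ordinal.omega0).ord.ToType),
      HasKappaPSP (Cardinal.aleph Ordinal.omega0) A)
    (δ : ℕ → Cardinal)
    (hmono : StrictMono δ)
    (hinf : ∀ n, ℵ₀ ≤ δ n)
    (hlt : ∀ n, δ n < Cardinal.aleph Ordinal.omega0)
    (hsup : (⨆ n, δ n) = Cardinal.aleph Ordinal.omega0) :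
    ¬ ∃ f : (Order.succ (Cardinal.aleph Ordinal.omega0)).ord.ToType →
        (ℕ → (Cardinal.aleph Ordinal.omega0).ord.ToType),
      (∀ β, ∀ n, ordinalOf (f β n) < (δ n).ord) ∧
      (∀ γ β, γ < β → EvLT (f γ) (f β)) ∧
      (∀ g : ℕ → (Cardinal.aleph Ordinal.omega0).ord.ToType,
        (∀ n, ordinalOf (g n) < (δ n).ord) → ∃ β, EvLT g (f β)) := by
  rintro ⟨f, hb, hinc, hcof⟩
  exact outer_aux hpsp f hinc
end
end

section
/- Assume ℵ_ω is a strong limit cardinal and every subset A of the generalized Baire space (ℵ_ω)^ω has the ℵ_ω-PSP. Then there is no ℵ_{ω+1}-sequence of pairwise distinct subsets of ℵ_ω; that is, there is no injective function from (the order type of) ℵ_{ω+1} into the power set of (the order type of) ℵ_ω. (Proposition 3.4(3).) -/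
noncomputable section
open Cardinal Set

namespace PSPAux
universe u

/-- restriction of a sequence to its first `m` values -/
def res {α : Type u} (x : ℕ → α) (m : ℕ) : Fin m → α := fun i => x i

/-- the basic cylinder determined by a finite tuple -/
def Cyl {α : Type u} {m : ℕ} (t : Fin m → α) : Set (ℕ → α) :=
  {x | ∀ i : Fin m, x (i : ℕ) = t i}

theorem mem_Cyl {α : Type u} {m : ℕ} {t : Fin m → α} {x : ℕ → α} :
    x ∈ Cyl t ↔ ∀ i : Fin m, x (i : ℕ) = t i := Iff.rfl

theorem res_mem_Cyl {α : Type u} {x : ℕ → α} {m : ℕ} : x ∈ Cyl (res x m) :=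
  fun _ => rfl

theorem Cyl_disjoint {α : Type u} {m : ℕ} {t t' : Fin m → α} (h : t ≠ t') :
    Disjoint (Cyl t) (Cyl t') := by
  rw [Set.disjoint_left]
  intro x hx hx'
  exact h (funext fun i => (hx i).symm.trans (hx' i))

theorem isOpen_Cyl {α : Type u} [TopologicalSpace α] [DiscreteTopology α]
    {m : ℕ} (t : Fin m → α) : IsOpen (Cyl t) := by
  have : Cyl t = ⋂ i : Fin m, (fun x : ℕ → α => x (i : ℕ)) ⁻¹' {t i} := by
    ext x; simp [Cyl]
  rw [this]
  exact isOpen_iInter_of_finite fun i =>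
    (isOpen_discrete _).preimage (continuous_apply _)

/-- membership in a closed set from finite approximations -/
theorem mem_of_res {α : Type u} [TopologicalSpace α] [DiscreteTopology α]
    {C : Set (ℕ → α)} (hC : IsClosed C) {x : ℕ → α}
    (h : ∀ m, ∃ y ∈ C, res y m = res x m) : x ∈ C := by
  rw [← hC.closure_eq]
  rw [mem_closure_iff]
  intro U hU hxU
  obtain ⟨I, u, hu, hsub⟩ := isOpen_pi_iff.1 hU x hxU
  obtain ⟨y, hyC, hy⟩ := h (I.sup id + 1)
  refine ⟨y, hsub ?_, hyC⟩
  intro a ha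
  have ha' : a < I.sup id + 1 := Nat.lt_succ_of_le (Finset.le_sup (f := id) ha)
  have : y a = x a := congrFun hy ⟨a, ha'⟩
  rw [this]
  exact (hu a ha).2

/-- the set of length-`m` finite approximations of members of `S` -/
def lvl {α : Type u} (S : Set (ℕ → α)) (m : ℕ) : Set (Fin m → α) :=
  (fun x => res x m) '' S

theorem mk_le_prod_lvl {α : Type u} (S : Set (ℕ → α)) :
    #S ≤ Cardinal.prod fun m => #(lvl S m) := by
  rw [← Cardinal.mk_pi]
  refine Cardinal.mk_le_of_injective (f := fun x : S =>
    fun m => (⟨res x.1 m, x.1, x.2, rfl⟩ : lvl S m)) ?_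
  intro x y hxy
  ext n
  have := congrFun (Subtype.ext_iff.1 (congrFun hxy (n + 1)))
    (⟨n, Nat.lt_succ_self n⟩ : Fin (n + 1))
  exact this

theorem mk_lvl_mono {α : Type u} (S : Set (ℕ → α)) {m m' : ℕ} (h : m ≤ m') :
    #(lvl S m) ≤ #(lvl S m') := by
  refine Cardinal.mk_le_of_surjective (f := fun t : lvl S m' =>
    (⟨res t.2.choose m, t.2.choose, t.2.choose_spec.1, rfl⟩ : lvl S m)) ?_
  rintro ⟨t, x, hx, rfl⟩
  refine ⟨⟨res x m', x, hx, rfl⟩, ?_⟩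
  ext1
  show res (⟨res x m', x, hx, rfl⟩ : lvl S m').2.choose m = res x m
  funext i
  have hc := (⟨res x m', x, hx, rfl⟩ : lvl S m').2.choose_spec
  have : res (⟨res x m', x, hx, rfl⟩ : lvl S m').2.choose m' = res x m' := hc.2
  exact congrFun this ⟨i, lt_of_lt_of_le i.2 h⟩

/-! ### Concrete setting -/

abbrev Kc : Cardinal.{u} := Cardinal.aleph Ordinal.omega0
abbrev Yc : Type u := Kc.{u}.ord.ToType
abbrev Xc : Type u := ℕ → Yc.{u}

theorem mkY : #Yc.{u} = Kc.{u} := by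
  rw [Cardinal.mk_toType, Cardinal.card_ord]

theorem aleph0_le_K : ℵ₀ ≤ Kc.{u} := Cardinal.aleph0_le_aleph _

theorem trace_big {P : Set Xc.{u}} (hP : IsKappaPerfect Kc.{u} P) {m : ℕ} {t : Fin m → Yc.{u}}
    (hne : (P ∩ Cyl t).Nonempty) : Kc.{u} ≤ #(P ∩ Cyl t : Set Xc.{u}) := by
  obtain ⟨x, hx⟩ := hne
  exact hP.2.2 x hx.1 (Cyl t) (isOpen_Cyl t) hx.2

theorem exists_big_level
    (hsl : ∀ c < Kc.{u}, 2 ^ c < Kc.{u})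
    {P : Set Xc.{u}} (hP : IsKappaPerfect Kc.{u} P) {m : ℕ} {t : Fin m → Yc.{u}}
    (hne : (P ∩ Cyl t).Nonempty) {c : Cardinal} (hc : c < Kc.{u}) (hinf : ℵ₀ ≤ c) :
    ∃ m' > m, c ≤ #(lvl (P ∩ Cyl t) m') := by
  set S : Set Xc.{u} := P ∩ Cyl t with hS
  have hSbig : Kc.{u} ≤ #S := trace_big hP hne
  set l : Cardinal := 2 ^ c with hl
  have hlK : l < Kc.{u} := hsl c hc
  have hcl : c ≤ l := (Cardinal.cantor c).le
  have hmain : ∃ m₀, l < #(lvl S m₀) := by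
    by_contra hcon
    push_neg at hcon
    have h1 : #S ≤ Cardinal.prod fun m => #(lvl S m) := mk_le_prod_lvl S
    have h2 : (Cardinal.prod fun m => #(lvl S m)) ≤ Cardinal.prod fun _ : ℕ => l :=
      Cardinal.prod_le_prod _ _ hcon
    have h3 : (Cardinal.prod fun _ : ℕ => l) = l ^ (ℵ₀ : Cardinal) := by
      simp [Cardinal.prod_const, Cardinal.mk_nat]
    have h4 : l ^ (ℵ₀ : Cardinal) = l := by
      rw [hl, ← Cardinal.power_mul, Cardinal.mul_aleph0_eq hinf]
    have : #S < Kc.{u} := lt_of_le_of_lt (h1.trans (h2.trans_eq (h3.trans h4))) hlK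
    exact absurd hSbig this.not_ge
  obtain ⟨m₀, hm₀⟩ := hmain
  refine ⟨max m₀ (m + 1), ?_, ?_⟩
  · omega
  · exact hcl.trans (hm₀.le.trans (mk_lvl_mono S (le_max_left _ _)))

/-! ### The splitting scheme -/

abbrev Bc (n : ℕ) : Type u := ((2 : Cardinal) ^ Cardinal.aleph (n : Ordinal)).ord.ToType

theorem mkB (n : ℕ) : #(Bc.{u} n) = 2 ^ Cardinal.aleph (n : Ordinal) := by
  rw [Cardinal.mk_toType, Cardinal.card_ord]

theorem alephn_lt_K (n : ℕ) : Cardinal.aleph (n : Ordinal) < Kc.{u} :=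
  Cardinal.aleph_lt_aleph.2 (Ordinal.nat_lt_omega0 n)

structure Scheme (P : Set Xc.{u}) (n : ℕ) where
  σ : (∀ i : Fin n, Bc.{u} i) → Σ m, Fin m → Yc.{u}
  ne : ∀ u, (P ∩ Cyl (σ u).2).Nonempty
  len : ∀ u, n ≤ (σ u).1
  disj : ∀ u v, u ≠ v → Disjoint (Cyl (σ u).2) (Cyl (σ v).2)

def initSeg {n : ℕ} (u : ∀ i : Fin (n + 1), Bc.{u} i) : ∀ i : Fin n, Bc.{u} i :=
  fun i => u i.castSucc

def Refines {P : Set Xc.{u}} {n : ℕ} (s : Scheme P n) (s' : Scheme P (n + 1)) : Prop :=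
  ∀ u, Cyl ((s'.σ u).2) ⊆ Cyl ((s.σ (initSeg u)).2)

theorem exists_step (hsl : ∀ c < Kc.{u}, 2 ^ c < Kc.{u}) {P : Set Xc.{u}} (hP : IsKappaPerfect Kc.{u} P)
    {n : ℕ} (s : Scheme P n) : ∃ s' : Scheme P (n + 1), Refines s s' := by
  classical
  have hstep : ∀ u : (∀ i : Fin n, Bc.{u} i), ∃ m' > (s.σ u).1,
      (2 : Cardinal) ^ Cardinal.aleph (n : Ordinal) ≤ #(lvl (P ∩ Cyl (s.σ u).2) m') := by
    intro u
    exact exists_big_level hsl hP (s.ne u)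
      (hsl _ (alephn_lt_K n)) (Cardinal.aleph0_le_aleph _ |>.trans (Cardinal.cantor _).le)
  choose m' hm' hbig using hstep
  have hemb : ∀ u, Nonempty (Bc.{u} n ↪ lvl (P ∩ Cyl (s.σ u).2) (m' u)) := by
    intro u
    rw [← Cardinal.le_def, mkB]
    exact hbig u
  have ι : ∀ u, Bc.{u} n ↪ lvl (P ∩ Cyl (s.σ u).2) (m' u) := fun u => (hemb u).some
  have hnode : ∀ u' : (∀ i : Fin (n + 1), Bc.{u} i), ∃ x,
      x ∈ P ∩ Cyl (s.σ (initSeg u')).2 ∧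
        res x (m' (initSeg u')) = (ι (initSeg u') (u' (Fin.last n))).1 := by
    intro u'
    obtain ⟨x, hx, hres⟩ := (ι (initSeg u') (u' (Fin.last n))).2
    exact ⟨x, hx, hres⟩
  have href : ∀ u' : (∀ i : Fin (n + 1), Bc.{u} i),
      Cyl (ι (initSeg u') (u' (Fin.last n))).1 ⊆ Cyl (s.σ (initSeg u')).2 := by
    intro u' z hz i
    obtain ⟨x, hxS, hres⟩ := hnode u'
    have hi : (i : ℕ) < m' (initSeg u') := lt_of_lt_of_le i.2 (hm' _).le
    have h1 : z (i : ℕ) = (ι (initSeg u') (u' (Fin.last n))).1 ⟨i, hi⟩ := hz ⟨i, hi⟩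
    have h2 : x (i : ℕ) = (ι (initSeg u') (u' (Fin.last n))).1 ⟨i, hi⟩ :=
      congrFun hres ⟨i, hi⟩
    rw [h1, ← h2]
    exact hxS.2 i
  refine ⟨⟨fun u => ⟨m' (initSeg u), (ι (initSeg u) (u (Fin.last n))).1⟩, ?_, ?_, ?_⟩, ?_⟩
  · intro u'
    obtain ⟨x, hxS, hres⟩ := hnode u'
    refine ⟨x, hxS.1, ?_⟩
    show x ∈ Cyl (ι (initSeg u') (u' (Fin.last n))).1
    rw [← hres]
    exact res_mem_Cyl
  · intro u'
    show n + 1 ≤ m' (initSeg u')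
    have h1 := hm' (initSeg u')
    have h2 := s.len (initSeg u')
    omega
  · intro u' v' hne'
    by_cases h : initSeg u' = initSeg v'
    · have hb : u' (Fin.last n) ≠ v' (Fin.last n) := by
        intro hb
        apply hne'
        funext i
        refine Fin.lastCases hb (fun j => ?_) i
        exact congrFun h j
      show Disjoint (Cyl (ι (initSeg u') (u' (Fin.last n))).1)
        (Cyl (ι (initSeg v') (v' (Fin.last n))).1)
      rw [← h]
      refine Cyl_disjoint fun heq => hb ?_
      exact (ι (initSeg u')).injective (Subtype.ext heq)
    · exact (s.disj _ _ h).mono (href u') (href v')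
  · exact href

def base {P : Set Xc.{u}} (hP : IsKappaPerfect Kc.{u} P) : Scheme P 0 where
  σ := fun _ => ⟨0, fun i => i.elim0⟩
  ne := fun _ => by
    obtain ⟨x, hx⟩ := hP.1
    exact ⟨x, hx, fun i => i.elim0⟩
  len := fun _ => Nat.zero_le _
  disj := fun u v h => absurd (funext fun i => i.elim0) h

def tower (hsl : ∀ c < Kc.{u}, 2 ^ c < Kc.{u}) {P : Set Xc.{u}} (hP : IsKappaPerfect Kc.{u} P) :
    ∀ n, Scheme P n :=
  fun n => Nat.rec (base hP) (fun _ s => (exists_step hsl hP s).choose) n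

theorem tower_refines (hsl : ∀ c < Kc.{u}, 2 ^ c < Kc.{u}) {P : Set Xc.{u}}
    (hP : IsKappaPerfect Kc.{u} P) (n : ℕ) :
    Refines (tower hsl hP n) (tower hsl hP (n + 1)) :=
  (exists_step hsl hP (tower hsl hP n)).choose_spec

section Limit

variable (hsl : ∀ c < Kc.{u}, 2 ^ c < Kc.{u}) {P : Set Xc.{u}} (hP : IsKappaPerfect Kc.{u} P)
  (f : ∀ n : ℕ, Bc.{u} n)

/-- the node at level `n` along the branch `f` -/
def τ (n : ℕ) : Σ m, Fin m → Yc.{u} := (tower hsl hP n).σ fun i : Fin n => f i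

theorem cylStep (n : ℕ) : Cyl (τ hsl hP f (n + 1)).2 ⊆ Cyl (τ hsl hP f n).2 := by
  have h := tower_refines hsl hP n (fun i : Fin (n + 1) => f i)
  exact h

theorem cylNested {n n' : ℕ} (h : n ≤ n') :
    Cyl (τ hsl hP f n').2 ⊆ Cyl (τ hsl hP f n).2 := by
  induction n', h using Nat.le_induction with
  | base => exact subset_rfl
  | succ n' hn ih => exact (cylStep hsl hP f n').trans ih

theorem exists_y (n : ℕ) : ∃ x, x ∈ P ∩ Cyl (τ hsl hP f n).2 :=
  (tower hsl hP n).ne _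

/-- chosen approximating points -/
def ypt (n : ℕ) : Xc.{u} := (exists_y hsl hP f n).choose

theorem ypt_mem (n : ℕ) : ypt hsl hP f n ∈ P ∩ Cyl (τ hsl hP f n).2 :=
  (exists_y hsl hP f n).choose_spec

/-- the limit point along the branch `f` -/
def xf : Xc.{u} := fun k => ypt hsl hP f (k + 1) k

theorem xf_val (k : ℕ) (hk : k < (τ hsl hP f (k + 1)).1) :
    xf hsl hP f k = (τ hsl hP f (k + 1)).2 ⟨k, hk⟩ :=
  (ypt_mem hsl hP f (k + 1)).2 ⟨k, hk⟩

theorem k_lt_len (k : ℕ) : k < (τ hsl hP f (k + 1)).1 :=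
  lt_of_lt_of_le (Nat.lt_succ_self _) ((tower hsl hP (k + 1)).len _)

theorem xf_mem_cyl (n : ℕ) : xf hsl hP f ∈ Cyl (τ hsl hP f n).2 := by
  intro i
  have hk1 : (i : ℕ) < (τ hsl hP f ((i : ℕ) + 1)).1 := k_lt_len hsl hP f i
  have hN1 : ypt hsl hP f (max n ((i : ℕ) + 1)) ∈ Cyl (τ hsl hP f n).2 :=
    cylNested hsl hP f (le_max_left _ _) (ypt_mem hsl hP f _).2
  have hN2 : ypt hsl hP f (max n ((i : ℕ) + 1)) ∈ Cyl (τ hsl hP f ((i : ℕ) + 1)).2 :=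
    cylNested hsl hP f (le_max_right _ _) (ypt_mem hsl hP f _).2
  calc xf hsl hP f (i : ℕ)
      = (τ hsl hP f ((i : ℕ) + 1)).2 ⟨i, hk1⟩ := xf_val hsl hP f i hk1
    _ = ypt hsl hP f (max n ((i : ℕ) + 1)) (i : ℕ) := (hN2 ⟨i, hk1⟩).symm
    _ = (τ hsl hP f n).2 i := hN1 i

theorem xf_mem : xf hsl hP f ∈ P := by
  apply mem_of_res hP.2.1
  intro m
  refine ⟨ypt hsl hP f m, (ypt_mem hsl hP f m).1, ?_⟩
  funext k
  have hk1 : (k : ℕ) < (τ hsl hP f ((k : ℕ) + 1)).1 := k_lt_len hsl hP f k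
  have hm : ypt hsl hP f m ∈ Cyl (τ hsl hP f ((k : ℕ) + 1)).2 :=
    cylNested hsl hP f k.2 (ypt_mem hsl hP f m).2
  calc res (ypt hsl hP f m) m k = ypt hsl hP f m (k : ℕ) := rfl
    _ = (τ hsl hP f ((k : ℕ) + 1)).2 ⟨k, hk1⟩ := hm ⟨k, hk1⟩
    _ = xf hsl hP f (k : ℕ) := (xf_val hsl hP f k hk1).symm
    _ = res (xf hsl hP f) m k := rfl

end Limit

theorem xf_injective (hsl : ∀ c < Kc.{u}, 2 ^ c < Kc.{u}) {P : Set Xc.{u}}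
    (hP : IsKappaPerfect Kc.{u} P) : Function.Injective (xf hsl hP) := by
  intro f g hfg
  by_contra hne
  obtain ⟨n, hn⟩ : ∃ n, f n ≠ g n := by
    by_contra h
    push_neg at h
    exact hne (funext h)
  have huv : (fun i : Fin (n + 1) => f i) ≠ (fun i : Fin (n + 1) => g i) := by
    intro h
    exact hn (congrFun h (Fin.last n))
  have hdisj := (tower hsl hP (n + 1)).disj _ _ huv
  have h1 : xf hsl hP f ∈ Cyl (τ hsl hP f (n + 1)).2 := xf_mem_cyl hsl hP f (n + 1)
  have h2 : xf hsl hP g ∈ Cyl (τ hsl hP g (n + 1)).2 := xf_mem_cyl hsl hP g (n + 1)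
  rw [hfg] at h1
  exact Set.disjoint_left.1 hdisj h1 h2

theorem sum_aleph_eq : (Cardinal.sum fun n : ℕ => Cardinal.aleph (n : Ordinal)) = Kc.{u} := by
  apply le_antisymm
  · calc (Cardinal.sum fun n : ℕ => Cardinal.aleph (n : Ordinal))
        ≤ Cardinal.sum fun _ : ℕ => Kc.{u} :=
          Cardinal.sum_le_sum _ _ fun n => (alephn_lt_K n).le
      _ = ℵ₀ * Kc.{u} := by
          simp [Cardinal.sum_const, Cardinal.mk_nat]
      _ = Kc.{u} := Cardinal.aleph0_mul_eq aleph0_le_K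
  · rw [show Kc.{u} = Cardinal.aleph Ordinal.omega0 from rfl,
      Cardinal.aleph_limit Ordinal.isSuccLimit_omega0]
    refine ciSup_le' ?_
    rintro ⟨a, ha⟩
    obtain ⟨n, rfl⟩ := Ordinal.lt_omega0.1 ha
    exact Cardinal.le_sum (fun n : ℕ => Cardinal.aleph (n : Ordinal)) n

theorem mk_branches : #(∀ n : ℕ, Bc.{u} n) = 2 ^ Kc.{u} := by
  rw [Cardinal.mk_pi]
  have : (fun n : ℕ => #(Bc.{u} n)) = fun n : ℕ => (2 : Cardinal) ^ Cardinal.aleph (n : Ordinal) := by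
    funext n; exact mkB n
  rw [this, ← Cardinal.power_sum, sum_aleph_eq]

/-- every `Kc.{u}`-perfect set has at least `2 ^ Kc.{u}` elements -/
theorem perfect_big (hsl : ∀ c < Kc.{u}, 2 ^ c < Kc.{u}) {P : Set Xc.{u}}
    (hP : IsKappaPerfect Kc.{u} P) : 2 ^ Kc.{u} ≤ #P := by
  rw [← mk_branches]
  exact Cardinal.mk_le_of_injective (f := fun f => (⟨xf hsl hP f, xf_mem hsl hP f⟩ : P))
    fun f g h => xf_injective hsl hP (Subtype.ext_iff.1 h)

/-! ### Counting perfect sets -/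

theorem closed_eq_of_lvl {C D : Set Xc.{u}} (hC : IsClosed C) (hD : IsClosed D)
    (h : ∀ m, lvl C m = lvl D m) : C = D := by
  have key : ∀ (C D : Set Xc.{u}), IsClosed D → (∀ m, lvl C m = lvl D m) → C ⊆ D := by
    intro C D hD h x hx
    apply mem_of_res hD
    intro m
    have hm : res x m ∈ lvl D m := (h m) ▸ ⟨x, hx, rfl⟩
    obtain ⟨y, hy, hres⟩ := hm
    exact ⟨y, hy, hres⟩
  exact le_antisymm (key C D hD h) (key D C hC fun m => (h m).symm)

theorem count_perfect : #{P : Set Xc.{u} // IsKappaPerfect Kc.{u} P} ≤ 2 ^ Kc.{u} := by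
  have hinj : Function.Injective
      (fun P : {P : Set Xc.{u} // IsKappaPerfect Kc.{u} P} => fun m => lvl P.1 m) := by
    intro P Q h
    exact Subtype.ext (closed_eq_of_lvl P.2.2.1 Q.2.2.1 fun m => congrFun h m)
  calc #{P : Set Xc.{u} // IsKappaPerfect Kc.{u} P}
      ≤ #(∀ m : ℕ, Set (Fin m → Yc.{u})) := Cardinal.mk_le_of_injective hinj
    _ ≤ 2 ^ Kc.{u} := by
        rw [Cardinal.mk_pi]
        calc (Cardinal.prod fun m => #(Set (Fin m → Yc.{u})))
            ≤ Cardinal.prod fun _ : ℕ => 2 ^ Kc.{u} := by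
              refine Cardinal.prod_le_prod _ _ fun m => ?_
              rw [Cardinal.mk_set]
              refine Cardinal.power_le_power_left two_ne_zero ?_
              have h1 : #(Fin m → Yc.{u}) = Kc.{u} ^ (m : Cardinal.{u}) := by
                simp [Cardinal.mk_arrow, mkY]
              rw [h1, Cardinal.power_natCast]
              exact Cardinal.power_nat_le aleph0_le_K
          _ = (2 ^ Kc.{u}) ^ (ℵ₀ : Cardinal) := by
              simp [Cardinal.prod_const, Cardinal.mk_nat]
          _ = 2 ^ Kc.{u} := by
              rw [← Cardinal.power_mul, Cardinal.mul_aleph0_eq aleph0_le_K]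

/-! ### There are at least `2 ^ Kc.{u}` perfect sets -/

instance : Nonempty Yc.{u} := by
  rw [Ordinal.toType_nonempty_iff_ne_zero, Ne, Cardinal.ord_eq_zero]
  exact fun h => absurd (h ▸ Cardinal.aleph_pos Ordinal.omega0) (lt_irrefl _)

instance : Nontrivial Yc.{u} := by
  rw [← Cardinal.one_lt_iff_nontrivial, mkY]
  exact lt_of_lt_of_le Cardinal.one_lt_aleph0 aleph0_le_K

/-- base point -/
def a₀ : Yc.{u} := Classical.arbitrary Yc.{u}

/-- a perfect set coding the subset `S` of `Yc.{u}` -/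
def R (S : Set Yc.{u}) : Set Xc.{u} := {x | x 1 ∈ S ∨ x 0 = a₀.{u}}

theorem R_closed (S : Set Yc.{u}) : IsClosed (R.{u} S) := by
  have : R.{u} S = ((fun x : Xc.{u} => x 1) ⁻¹' S) ∪ ((fun x : Xc.{u} => x 0) ⁻¹' {a₀.{u}}) := rfl
  rw [this]
  exact ((isClosed_discrete S).preimage (continuous_apply 1)).union
    ((isClosed_discrete _).preimage (continuous_apply 0))

theorem R_perfect (S : Set Yc.{u}) : IsKappaPerfect Kc.{u} (R.{u} S) := by
  refine ⟨⟨fun _ => a₀.{u}, Or.inr rfl⟩, R_closed S, ?_⟩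
  intro x hx U hU hxU
  obtain ⟨I, u, hu, hsub⟩ := isOpen_pi_iff.1 hU x hxU
  set k : ℕ := I.sup id + 2 with hk
  have hkI : k ∉ I := by
    intro h
    have := Finset.le_sup (f := id) h
    simp only [id] at this
    omega
  have hinj : Function.Injective (fun b : Yc.{u} => Function.update x k b) := by
    intro b b' h
    have := congrFun h k
    simpa using this
  have hmem : ∀ b : Yc.{u}, Function.update x k b ∈ R.{u} S ∩ U := by
    intro b
    constructor
    · have h0 : Function.update x k b 0 = x 0 := Function.update_of_ne (by omega) _ _
      have h1 : Function.update x k b 1 = x 1 := Function.update_of_ne (by omega) _ _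
      rcases hx with h | h
      · exact Or.inl (h1 ▸ h)
      · exact Or.inr (h0 ▸ h)
    · refine hsub ?_
      intro a ha
      have : Function.update x k b a = x a :=
        Function.update_of_ne (by rintro rfl; exact hkI ha) _ _
      rw [this]
      exact (hu a ha).2
  calc Kc.{u} = #Yc.{u} := mkY.symm
    _ ≤ #(R.{u} S ∩ U : Set Xc.{u}) := Cardinal.mk_le_of_injective
        (f := fun b : Yc.{u} => (⟨Function.update x k b, hmem b⟩ : (R.{u} S ∩ U : Set Xc.{u})))
        fun b b' h => hinj (Subtype.ext_iff.1 h)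

theorem R_injective : Function.Injective R.{u} := by
  have key : ∀ S T : Set Yc.{u}, R.{u} S = R.{u} T → S ⊆ T := by
    intro S T h a ha
    obtain ⟨b, hb⟩ := exists_ne a₀.{u}
    have hx : (fun n : ℕ => if n = 1 then a else b) ∈ R.{u} S := Or.inl (by simp [ha])
    rw [h] at hx
    rcases hx with h' | h'
    · simpa using h'
    · simp only at h'
      exact absurd h' hb
  exact fun S T h => le_antisymm (key S T h) (key T S h.symm)

theorem mk_perfect_ge : 2 ^ Kc.{u} ≤ #{P : Set Xc.{u} // IsKappaPerfect Kc.{u} P} := by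
  have : (2 : Cardinal) ^ Kc.{u} = #(Set Yc.{u}) := by rw [Cardinal.mk_set, mkY]
  rw [this]
  exact Cardinal.mk_le_of_injective
    (f := fun S : Set Yc.{u} => (⟨R.{u} S, R_perfect S⟩ : {P : Set Xc.{u} // IsKappaPerfect Kc.{u} P}))
    fun S T h => R_injective (Subtype.ext_iff.1 h)

/-! ### The Bernstein-style diagonalization -/

instance : Inhabited Xc.{u} := ⟨fun _ => Classical.arbitrary Yc.{u}⟩

open Classical in
/-- canonical choice of an element of a set -/
def pick (S : Set Xc.{u}) : Xc.{u} := if h : S.Nonempty then h.some else default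

theorem pick_mem {S : Set Xc.{u}} (h : S.Nonempty) : pick S ∈ S := by
  rw [pick, dif_pos h]
  exact h.some_mem

theorem diff_nonempty_of_mk_lt {Q T : Set Xc.{u}} (h : #T < #Q) : (Q \ T).Nonempty := by
  by_contra hcon
  rw [Set.not_nonempty_iff_eq_empty, Set.diff_eq_empty] at hcon
  exact absurd (Cardinal.mk_le_mk_of_subset hcon) h.not_ge

abbrev PIc : Type u := {P : Set Xc.{u} // IsKappaPerfect Kc.{u} P}

abbrev Wc : Type u := (#PIc.{u}).ord.ToType

theorem mkW : #Wc.{u} = #PIc.{u} := by rw [Cardinal.mk_toType, Cardinal.card_ord]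

/-- enumeration of all perfect sets -/
def idx : Wc.{u} ≃ PIc.{u} := Classical.choice (Cardinal.eq.1 mkW)

theorem wfW : WellFounded ((· < ·) : Wc.{u} → Wc.{u} → Prop) :=
  (wellFoundedLT_toType _).wf

/-- the recursive choice of pairs of points -/
def g : Wc.{u} → Xc.{u} × Xc.{u} :=
  wfW.fix fun i rec =>
    let used : Set Xc.{u} := ⋃ j : {j : Wc.{u} // j < i}, {(rec j j.2).1, (rec j j.2).2}
    let Q : Set Xc.{u} := (idx i).1
    let a := pick (Q \ used)
    (a, pick (Q \ (used ∪ {a})))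

def usedAt (i : Wc.{u}) : Set Xc.{u} := ⋃ j : {j : Wc.{u} // j < i}, {(g j.1).1, (g j.1).2}

theorem g_eq (i : Wc.{u}) :
    g i = (pick ((idx i).1 \ usedAt i),
      pick ((idx i).1 \ (usedAt i ∪ {pick ((idx i).1 \ usedAt i)}))) := by
  show wfW.fix _ i = _
  rw [WellFounded.fix_eq]
  rfl

theorem mk_PI_big : 2 ^ Kc.{u} ≤ #PIc.{u} := mk_perfect_ge

theorem aleph0_le_mkPI : ℵ₀ ≤ #PIc.{u} :=
  (aleph0_le_K.trans (Cardinal.cantor Kc.{u}).le).trans mk_PI_big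

theorem mk_usedAt_lt (i : Wc.{u}) : #(usedAt i) < #PIc.{u} := by
  have hsub : usedAt i ⊆
      ((fun j : {j : Wc.{u} // j < i} => (g j.1).1) '' Set.univ) ∪
      ((fun j : {j : Wc.{u} // j < i} => (g j.1).2) '' Set.univ) := by
    rintro x hx
    obtain ⟨j, hj⟩ := Set.mem_iUnion.1 hx
    rcases hj with h | h
    · exact Or.inl ⟨j, Set.mem_univ _, h.symm⟩
    · exact Or.inr ⟨j, Set.mem_univ _, (Set.mem_singleton_iff.1 h).symm⟩
  have hIio : #{j : Wc.{u} // j < i} < #PIc.{u} := Cardinal.mk_Iio_ord_toType (c := #PIc.{u}) i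
  calc #(usedAt i) ≤ _ := Cardinal.mk_le_mk_of_subset hsub
    _ ≤ #((fun j : {j : Wc.{u} // j < i} => (g j.1).1) '' Set.univ)
        + #((fun j : {j : Wc.{u} // j < i} => (g j.1).2) '' Set.univ) := Cardinal.mk_union_le _ _
    _ ≤ #{j : Wc.{u} // j < i} + #{j : Wc.{u} // j < i} := by
        gcongr <;> exact Cardinal.mk_image_le.trans (by simp)
    _ < #PIc.{u} := Cardinal.add_lt_of_lt aleph0_le_mkPI hIio hIio

theorem mk_perfect_set_big (hsl : ∀ c < Kc.{u}, 2 ^ c < Kc.{u}) (i : Wc.{u}) :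
    #PIc.{u} ≤ #((idx i).1) :=
  count_perfect.trans (perfect_big hsl (idx i).2)

theorem ha (hsl : ∀ c < Kc.{u}, 2 ^ c < Kc.{u}) (i : Wc.{u}) :
    (g i).1 ∈ (idx i).1 \ usedAt i := by
  rw [g_eq]
  exact pick_mem (diff_nonempty_of_mk_lt
    ((mk_usedAt_lt i).trans_le (mk_perfect_set_big hsl i)))

theorem hb (hsl : ∀ c < Kc.{u}, 2 ^ c < Kc.{u}) (i : Wc.{u}) :
    (g i).2 ∈ (idx i).1 \ (usedAt i ∪ {(g i).1}) := by
  have hlt : #(usedAt i ∪ {(g i).1} : Set Xc.{u}) < #PIc.{u} := by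
    calc #(usedAt i ∪ {(g i).1} : Set Xc.{u}) ≤ #(usedAt i) + #({(g i).1} : Set Xc.{u}) :=
        Cardinal.mk_union_le _ _
      _ < #PIc.{u} := Cardinal.add_lt_of_lt aleph0_le_mkPI (mk_usedAt_lt i)
          (by rw [Cardinal.mk_singleton]; exact Cardinal.one_lt_aleph0.trans_le aleph0_le_mkPI)
  have h1 : (g i).1 = pick ((idx i).1 \ usedAt i) := by rw [g_eq]
  have h2 : (g i).2 = pick ((idx i).1 \ (usedAt i ∪ {pick ((idx i).1 \ usedAt i)})) := by
    conv_lhs => rw [g_eq]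
  rw [h1] at hlt
  have hne := diff_nonempty_of_mk_lt (hlt.trans_le (mk_perfect_set_big hsl i))
  rw [h2, h1]
  exact pick_mem hne

theorem mem_usedAt {j i : Wc.{u}} (h : j < i) :
    (g j).1 ∈ usedAt i ∧ (g j).2 ∈ usedAt i :=
  ⟨Set.mem_iUnion.2 ⟨⟨j, h⟩, Or.inl rfl⟩, Set.mem_iUnion.2 ⟨⟨j, h⟩, Or.inr rfl⟩⟩

theorem a_injective (hsl : ∀ c < Kc.{u}, 2 ^ c < Kc.{u}) :
    Function.Injective fun i : Wc.{u} => (g i).1 := by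
  intro i j hij
  have hij' : (g i).1 = (g j).1 := hij
  by_contra hne
  rcases lt_trichotomy i j with h | h | h
  · have : (g i).1 ∈ usedAt j := (mem_usedAt h).1
    rw [hij'] at this
    exact (ha hsl j).2 this
  · exact hne h
  · have : (g j).1 ∈ usedAt i := (mem_usedAt h).1
    rw [← hij'] at this
    exact (ha hsl i).2 this

/-- the Bernstein-type set -/
def ABad : Set Xc.{u} := Set.range fun i : Wc.{u} => (g i).1

theorem ABad_big (hsl : ∀ c < Kc.{u}, 2 ^ c < Kc.{u}) : Kc.{u} < #ABad := by
  rw [ABad, Cardinal.mk_range_eq _ (a_injective hsl), mkW]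
  calc Kc.{u} < 2 ^ Kc.{u} := Cardinal.cantor Kc.{u}
    _ ≤ #PIc.{u} := mk_PI_big

theorem ABad_no_perfect (hsl : ∀ c < Kc.{u}, 2 ^ c < Kc.{u}) :
    ∀ P ⊆ ABad, ¬ IsKappaPerfect Kc.{u} P := by
  intro P hsub hP
  have hPi : ((idx (idx.symm ⟨P, hP⟩)).1 : Set Xc.{u}) = P := by
    rw [Equiv.apply_symm_apply]
  set i : Wc.{u} := idx.symm ⟨P, hP⟩
  have hbP : (g i).2 ∈ ABad := hsub (hPi ▸ (hb hsl i).1)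
  obtain ⟨j, hj⟩ := hbP
  have hj' : (g j).1 = (g i).2 := hj
  rcases lt_trichotomy j i with h | h | h
  · have : (g j).1 ∈ usedAt i := (mem_usedAt h).1
    rw [hj'] at this
    exact (hb hsl i).2 (Set.mem_union_left _ this)
  · refine (hb hsl i).2 (Set.mem_union_right _ ?_)
    rw [← hj', h]
    rfl
  · have : (g i).2 ∈ usedAt j := (mem_usedAt h).2
    rw [← hj'] at this
    exact (ha hsl j).2 this

/-- The hypotheses are jointly contradictory. -/
theorem final (hsl : ∀ c < Kc.{u}, 2 ^ c < Kc.{u})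
    (hpsp : ∀ A : Set Xc.{u}, #A ≤ Kc.{u} ∨ ∃ P ⊆ A, IsKappaPerfect Kc.{u} P) : False := by
  rcases hpsp ABad with h | ⟨P, hPA, hP⟩
  · exact absurd h (ABad_big hsl).not_ge
  · exact ABad_no_perfect hsl P hPA hP

/-- the strong limit hypothesis transfers up in universes -/
theorem sl_up.{u1, v1}
    (h : ∀ c < Cardinal.aleph.{u1} Ordinal.omega0, 2 ^ c < Cardinal.aleph Ordinal.omega0) :
    ∀ c < Cardinal.aleph.{max u1 v1} Ordinal.omega0, 2 ^ c < Cardinal.aleph Ordinal.omega0 := by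
  have halp : Cardinal.aleph.{max u1 v1} Ordinal.omega0
      = Cardinal.lift.{v1} (Cardinal.aleph.{u1} Ordinal.omega0) := by
    rw [Cardinal.lift_aleph, Ordinal.lift_omega0]
  intro c hc
  rw [halp] at hc ⊢
  obtain ⟨c', hc', rfl⟩ := Cardinal.lt_lift_iff.1 hc
  rw [← Cardinal.lift_two.{v1, u1}, ← Cardinal.lift_power]
  exact Cardinal.lift_lt.2 (h c' hc')

/-- the strong limit hypothesis transfers down in universes -/
theorem sl_down.{u1, v1}
    (h : ∀ c < Cardinal.aleph.{max u1 v1} Ordinal.omega0, 2 ^ c < Cardinal.aleph Ordinal.omega0) :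
    ∀ c < Cardinal.aleph.{v1} Ordinal.omega0, 2 ^ c < Cardinal.aleph Ordinal.omega0 := by
  have halp : Cardinal.aleph.{max u1 v1} Ordinal.omega0
      = Cardinal.lift.{u1} (Cardinal.aleph.{v1} Ordinal.omega0) := by
    rw [Cardinal.lift_aleph, Ordinal.lift_omega0]
  intro c hc
  have h2 := h (Cardinal.lift.{u1} c) (by rw [halp]; exact Cardinal.lift_lt.2 hc)
  rw [halp, ← Cardinal.lift_two.{u1, v1}, ← Cardinal.lift_power, Cardinal.lift_lt] at h2
  exact h2

/-- the strong limit hypothesis transfers across universes -/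
theorem sl_transfer.{a, b}
    (h : ∀ c < Cardinal.aleph.{a} Ordinal.omega0, 2 ^ c < Cardinal.aleph Ordinal.omega0) :
    ∀ c < Cardinal.aleph.{b} Ordinal.omega0, 2 ^ c < Cardinal.aleph Ordinal.omega0 :=
  sl_down.{a, b} (sl_up.{a, b} h)

end PSPAux


/-- If ℵ_ω is a strong limit cardinal and every subset of (ℵ_ω)^ω has the ℵ_ω-PSP, then
there is no injection from (the order type of) ℵ_{ω+1} into the power set of (the order
type of) ℵ_ω; equivalently, no ℵ_{ω+1}-sequence of pairwise distinct subsets of ℵ_ω. -/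
theorem no_long_sequence_of_distinct_subsets
    (hsl : ∀ c < Cardinal.aleph Ordinal.omega0, 2 ^ c < Cardinal.aleph Ordinal.omega0)
    (hpsp : ∀ A : Set (ℕ → (Cardinal.aleph Ordinal.omega0).ord.ToType),
      HasKappaPSP (Cardinal.aleph Ordinal.omega0) A) :
    ¬ ∃ F : (Order.succ (Cardinal.aleph Ordinal.omega0)).ord.ToType →
        Set ((Cardinal.aleph Ordinal.omega0).ord.ToType),
      Function.Injective F := by
  intro _
  exact PSPAux.final (PSPAux.sl_transfer hsl) fun A => hpsp A
end
end

section
/- Assume ℵ_ω is a strong limit cardinal and every subset A of the generalized Baire space (ℵ_ω)^ω has the ℵ_ω-PSP. Then ◊_{ℵ_{ω+1}} fails; that is, there is no ◊_{ℵ_{ω+1}}-sequence. (Proposition 3.4(4).) -/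
set_option maxHeartbeats 1000000
noncomputable section
universe u v
open Cardinal Set

/-- `C` is unbounded below `β`: every `γ < β` is dominated by some element of `C` below `β`. -/
def UnboundedBelow (C : Set Ordinal) (β : Ordinal) : Prop :=
  ∀ γ < β, ∃ δ ∈ C, γ ≤ δ ∧ δ < β

/-- `C` is club in `lam`: a subset of `lam` that is unbounded in `lam` and closed, i.e.
every nonzero limit ordinal `β < lam` in which `C ∩ β` is unbounded belongs to `C`. -/
def IsClubIn (C : Set Ordinal) (lam : Ordinal) : Prop :=
  C ⊆ Set.Iio lam ∧ UnboundedBelow C lam ∧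
    ∀ β < lam, Order.IsSuccLimit β → UnboundedBelow C β → β ∈ C

/-- `S` is stationary in `lam`: it meets every club subset of `lam`. -/
def IsStationaryIn (S : Set Ordinal) (lam : Ordinal) : Prop :=
  ∀ C, IsClubIn C lam → (S ∩ C).Nonempty

/-- A `◊_lam`-sequence: a sequence `⟨A α : α < lam⟩` with `A α ⊆ α`, such that for every
`B ⊆ lam` the set of `α < lam` with `B ∩ α = A α` is stationary in `lam`. -/
def IsDiamondSeq (lam : Ordinal) (A : Ordinal → Set Ordinal) : Prop :=
  (∀ α < lam, A α ⊆ Set.Iio α) ∧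
    ∀ B ⊆ Set.Iio lam, IsStationaryIn {α | α < lam ∧ B ∩ Set.Iio α = A α} lam



section Aux
variable {o : Ordinal}

instance inst_s3 (o : Ordinal) : DiscreteTopology o.ToType := ⟨rfl⟩

variable {o : Ordinal}

/-- agreement on first n coordinates -/
def Agree (x : ℕ → o.ToType) (n : ℕ) : Set (ℕ → o.ToType) := {y | ∀ i < n, y i = x i}

theorem isOpen_agree (x : ℕ → o.ToType) (n : ℕ) : IsOpen (Agree x n) := by
  have : Agree x n = ⋂ i : Fin n, (fun y : ℕ → o.ToType => y i.1) ⁻¹' {x i.1} := by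
    ext y; simp [Agree, Fin.forall_iff]
  rw [this]
  exact isOpen_iInter_of_finite fun i =>
    (continuous_apply i.1).isOpen_preimage _ (isOpen_discrete _)

theorem mem_agree_self (x : ℕ → o.ToType) (n : ℕ) : x ∈ Agree x n := fun _ _ => rfl

theorem exists_agree_subset {U : Set (ℕ → o.ToType)} (hU : IsOpen U) {x : ℕ → o.ToType}
    (hx : x ∈ U) : ∃ n, Agree x n ⊆ U := by
  obtain ⟨I, u, hIu, hsub⟩ := isOpen_pi_iff.1 hU x hx
  refine ⟨(I.sup id) + 1, fun y hy => hsub ?_⟩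
  intro i hi
  have : y i = x i := hy i (Nat.lt_succ_of_le (Finset.le_sup (f := id) hi))
  rw [this]; exact (hIu i hi).2

theorem mem_closure_iff_agree {s : Set (ℕ → o.ToType)} {x : ℕ → o.ToType} :
    x ∈ closure s ↔ ∀ n, ∃ y ∈ s, y ∈ Agree x n := by
  rw [mem_closure_iff]
  constructor
  · intro h n
    obtain ⟨y, hy1, hy2⟩ := h _ (isOpen_agree x n) (mem_agree_self x n)
    exact ⟨y, hy2, hy1⟩
  · intro h U hU hxU
    obtain ⟨n, hn⟩ := exists_agree_subset hU hxU
    obtain ⟨y, hy1, hy2⟩ := h n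
    exact ⟨y, hn hy2, hy1⟩

/-- initial segment of length n as a list -/
def seg (x : ℕ → o.ToType) (n : ℕ) : List o.ToType := List.ofFn (fun i : Fin n => x i)

@[simp] theorem seg_length (x : ℕ → o.ToType) (n : ℕ) : (seg x n).length = n := by
  simp [seg]

theorem seg_get (x : ℕ → o.ToType) {n i : ℕ} (h : i < n) :
    (seg x n).get ⟨i, by simpa using h⟩ = x i := by
  simp [seg]

theorem seg_prefix (x : ℕ → o.ToType) {m n : ℕ} (h : m ≤ n) : seg x m <+: seg x n := by
  rw [List.prefix_iff_eq_take]
  apply List.ext_getElem (by simp [h, Nat.min_eq_left]) ?_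
  intro i h1 h2
  rw [List.getElem_take]
  simp [seg]

theorem agree_iff_seg {x y : ℕ → o.ToType} {n : ℕ} : y ∈ Agree x n ↔ seg y n = seg x n := by
  constructor
  · intro h; apply List.ext_getElem (by simp)
    intro i h1 h2
    have : i < n := by simpa using h1
    simpa [seg] using h i this
  · intro h i hi
    have := congrArg (fun l => l.getD i (x 0)) h
    simpa [seg, List.getD, hi] using this

/-- the tree of a set -/
def treeOf (C : Set (ℕ → o.ToType)) : Set (List o.ToType) :=
  {l | ∃ x ∈ C, seg x l.length = l}

theorem seg_mem_treeOf {C : Set (ℕ → o.ToType)} {x : ℕ → o.ToType} (hx : x ∈ C) (n : ℕ) :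
    seg x n ∈ treeOf C := ⟨x, hx, by simp⟩

theorem mem_of_treeOf {C : Set (ℕ → o.ToType)} (hC : IsClosed C) {x : ℕ → o.ToType}
    (h : ∀ᶠ n in Filter.atTop, seg x n ∈ treeOf C) : x ∈ C := by
  rw [← hC.closure_eq]
  rw [mem_closure_iff_agree]
  intro n
  obtain ⟨m, hm⟩ := h.exists_forall_of_atTop
  obtain ⟨y, hy, hseg⟩ := hm (max n m) (le_max_right _ _)
  refine ⟨y, hy, ?_⟩
  intro i hi
  have hcongr := congrArg (fun l => l.getD i (x 0)) hseg
  have hin : i < (max n m) := lt_of_lt_of_le hi (le_max_left _ _)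
  simpa [seg, List.getD, hin] using hcongr

theorem closed_eq_of_treeOf {C D : Set (ℕ → o.ToType)} (hC : IsClosed C) (hD : IsClosed D)
    (h : treeOf C = treeOf D) : C = D := by
  have key : ∀ (C D : Set (ℕ → o.ToType)), IsClosed D → treeOf C = treeOf D → C ⊆ D := by
    intro C D hD h x hx
    apply mem_of_treeOf hD
    filter_upwards with n
    rw [← h]
    exact seg_mem_treeOf hx n
  exact le_antisymm (key C D hD h) (key D C hC h.symm)

theorem seg_getD (x : ℕ → o.ToType) {n i : ℕ} (h : i < n) (d : o.ToType) :
    (seg x n).getD i d = x i := by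
  rw [List.getD_eq_getElem _ _ (by simpa using h)]
  simp [seg]

end Aux

theorem two_power_le_of_diamond {κ : Cardinal} {A : Ordinal → Set Ordinal}
    (hA : IsDiamondSeq (Order.succ κ).ord A) : 2 ^ κ ≤ Order.succ κ := by
  set lam := (Order.succ κ).ord with hlam
  have hκlam : κ.ord < lam := Cardinal.ord_lt_ord.2 (Order.lt_succ κ)
  -- the club of ordinals ≥ κ.ord
  have hclub : IsClubIn (Set.Ico κ.ord lam) lam := by
    refine ⟨fun β hβ => hβ.2, ?_, ?_⟩
    · intro γ hγ
      exact ⟨max γ κ.ord, ⟨le_max_right _ _, max_lt hγ hκlam⟩, le_max_left _ _,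
        max_lt hγ hκlam⟩
    · intro β hβ hlim hub
      obtain ⟨δ, hδC, -, hδβ⟩ := hub 0 hlim.pos
      exact ⟨hδC.1.trans hδβ.le, hβ⟩
  -- every subset of Iio κ.ord is guessed
  have guess : ∀ B ⊆ Set.Iio κ.ord, ∃ α, α ∈ Set.Iio lam ∧ A α = B := by
    intro B hB
    have hB' : B ⊆ Set.Iio lam := hB.trans fun x hx => lt_trans hx hκlam
    obtain ⟨α, hαS, hαC⟩ := hA.2 B hB' _ hclub
    refine ⟨α, hαS.1, ?_⟩
    rw [← hαS.2]
    apply Set.inter_eq_left.2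
    exact hB.trans fun x hx => lt_of_lt_of_le hx hαC.1
  -- injection from the powerset of Iio κ.ord into Iio lam
  have hinj : ∃ f : Set (Set.Iio κ.ord) → Set.Iio lam, Function.Injective f := by
    have hex : ∀ s : Set (Set.Iio κ.ord), ∃ α, α ∈ Set.Iio lam ∧
        A α = Subtype.val '' s := by
      intro s
      exact guess _ (by rintro x ⟨y, -, rfl⟩; exact y.2)
    choose f hf1 hf2 using hex
    refine ⟨fun s => ⟨f s, hf1 s⟩, fun s t hst => ?_⟩
    have : Subtype.val '' s = Subtype.val '' t := by
      rw [← hf2 s, ← hf2 t]; simp only at hst ⊢; rw [Subtype.mk_eq_mk.1 hst]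
    exact Set.image_injective.2 Subtype.val_injective this
  obtain ⟨f, hf⟩ := hinj
  have hcard : #(Set (Set.Iio κ.ord)) ≤ #(Set.Iio lam) := Cardinal.mk_le_of_injective hf
  rw [Cardinal.mk_set, Ordinal.mk_Iio_ordinal, Ordinal.mk_Iio_ordinal, Cardinal.card_ord,
    Cardinal.card_ord, ← Cardinal.lift_two.{u_1+1, u_1}, ← Cardinal.lift_power, Cardinal.lift_le] at hcard
  exact hcard

section Aux2
variable {o : Ordinal}
-- node extension: the set of points of P agreeing with a tree node has size ≥ κ
theorem perfect_node_big {κ : Cardinal} {P : Set (ℕ → κ.ord.ToType)}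
    (hP : IsKappaPerfect κ P) {l : List κ.ord.ToType} (hl : l ∈ treeOf P) :
    ∃ x ∈ P, seg x l.length = l ∧ κ ≤ #(P ∩ Agree x l.length : Set _) := by
  obtain ⟨x, hx, hseg⟩ := hl
  exact ⟨x, hx, hseg, hP.2.2 x hx _ (isOpen_agree x l.length) (mem_agree_self x l.length)⟩

/-- Lemma A: extraction of large antichains above any node of the tree of a perfect set. -/
theorem exists_antichain {κ : Cardinal} {P : Set (ℕ → κ.ord.ToType)}
    (hP : IsKappaPerfect κ P) {l : List κ.ord.ToType} (hl : l ∈ treeOf P)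
    {μ : Cardinal} (hμ : ℵ₀ ≤ μ) (hμκ : 2 ^ μ < κ) :
    ∃ g : μ.ord.ToType → List κ.ord.ToType,
      (∀ a, g a ∈ treeOf P ∧ l <+: g a ∧ l.length < (g a).length) ∧
      ∀ a b, a ≠ b → ¬ (g a <+: g b) := by
  by_contra hcon
  push_neg at hcon
  set n := l.length with hn
  set S : Set (List κ.ord.ToType) :=
    {t | t ∈ treeOf P ∧ l <+: t ∧ n < t.length} with hS
  -- each level of S is small
  have hlevel : ∀ m : ℕ, #({t ∈ S | t.length = m} : Set _) ≤ μ := by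
    intro m
    by_contra hbig
    push_neg at hbig
    have hle : μ ≤ #({t ∈ S | t.length = m} : Set _) := hbig.le
    rw [← Cardinal.mk_ord_toType μ] at hle
    obtain ⟨emb⟩ := Cardinal.le_def _ _ |>.1 hle
    obtain ⟨a, b, hab, hpre⟩ := hcon (fun a => (emb a).1)
      (fun a => ⟨(emb a).2.1.1, (emb a).2.1.2.1, (emb a).2.1.2.2⟩)
    have hlen : ((emb a).1 : List _).length = ((emb b).1 : List _).length := by
      rw [(emb a).2.2, (emb b).2.2]
    have : (emb a).1 = (emb b).1 := List.IsPrefix.eq_of_length hpre hlen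
    exact hab (emb.injective (Subtype.ext this))
  -- hence S is small
  have hSsub : S ⊆ ⋃ m : ULift.{u_1} ℕ, {t ∈ S | t.length = m.down} := fun t ht =>
    Set.mem_iUnion.2 ⟨⟨t.length⟩, ht, rfl⟩
  have hScard : #S ≤ μ := by
    calc #S ≤ #(⋃ m : ULift.{u_1} ℕ, {t ∈ S | t.length = m.down}) :=
          Cardinal.mk_le_mk_of_subset hSsub
    _ ≤ #(ULift.{u_1} ℕ) * ⨆ m : ULift.{u_1} ℕ, #({t ∈ S | t.length = m.down} : Set _) :=
          Cardinal.mk_iUnion_le _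
    _ ≤ ℵ₀ * μ := by
        rw [Cardinal.mk_uLift, Cardinal.mk_nat, Cardinal.lift_aleph0]
        exact mul_le_mul_right (ciSup_le' fun (m : ULift.{u_1} ℕ) => hlevel m.down) _
    _ = μ := by rw [Cardinal.mul_eq_max (le_refl ℵ₀) hμ]; exact max_eq_right hμ
  -- P ∩ Agree x n embeds into ℕ → S
  obtain ⟨x, hx, hseg, hbig⟩ := perfect_node_big hP hl
  have hembed : #(P ∩ Agree x n : Set _) ≤ #(ULift.{u_1} ℕ → S) := by
    refine Cardinal.mk_le_of_injective (f := fun (y : (P ∩ Agree x n : Set _)) (m : ULift.{u_1} ℕ) =>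
      ⟨seg (y : ℕ → _) (n + m.down + 1), seg_mem_treeOf y.2.1 _, ?_, ?_⟩) ?_
    · -- l <+: seg y (n+m+1)
      have h1 : seg (y : ℕ → _) n = seg x n := agree_iff_seg.1 y.2.2
      calc l = seg x n := hseg.symm
      _ = seg (y : ℕ → _) n := h1.symm
      _ <+: seg (y : ℕ → _) (n + m.down + 1) := seg_prefix _ (by omega)
    · simp [hn]
    · intro y z hyz
      apply Subtype.ext
      funext i
      have := congrFun hyz ⟨i⟩
      have h2 := congrArg (fun w => (Subtype.val w : List _).getD i (x 0)) this
      simp only at h2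
      rwa [seg_getD _ (by omega) _, seg_getD _ (by omega) _] at h2
  have hpow : #(ULift.{u_1} ℕ → S) ≤ 2 ^ μ := by
    calc #(ULift.{u_1} ℕ → S) = #S ^ (ℵ₀ : Cardinal) := by
          rw [Cardinal.mk_arrow]; simp
    _ ≤ μ ^ (ℵ₀ : Cardinal) := Cardinal.power_le_power_right hScard
    _ ≤ (2 ^ μ) ^ (ℵ₀ : Cardinal) := Cardinal.power_le_power_right (Cardinal.cantor μ).le
    _ = 2 ^ (μ * ℵ₀) := Cardinal.power_mul.symm
    _ = 2 ^ μ := by rw [Cardinal.mul_eq_max hμ (le_refl ℵ₀), max_eq_left hμ]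
  exact absurd ((hbig.trans hembed).trans hpow) (not_le.2 hμκ)

/-- Data for a Cantor scheme inside the tree of `P`. -/
structure SchemeData (κ : Cardinal) (P : Set (ℕ → κ.ord.ToType)) (μ : ℕ → Cardinal) where
  root : {l : List κ.ord.ToType // l ∈ treeOf P}
  g : {l : List κ.ord.ToType // l ∈ treeOf P} → (n : ℕ) → (μ n).ord.ToType →
      {l : List κ.ord.ToType // l ∈ treeOf P}
  pre : ∀ l n a, l.1 <+: (g l n a).1
  lt : ∀ l n a, l.1.length < (g l n a).1.length
  anti : ∀ l n a b, a ≠ b → ¬ ((g l n a).1 <+: (g l n b).1)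

variable {κ : Cardinal} {P : Set (ℕ → κ.ord.ToType)} {μ : ℕ → Cardinal}

/-- the nodes of the scheme -/
def SchemeData.node (D : SchemeData κ P μ) :
    (n : ℕ) → ((i : Fin n) → (μ i).ord.ToType) → {l : List κ.ord.ToType // l ∈ treeOf P}
  | 0, _ => D.root
  | n+1, σ => D.g (D.node n (fun i => σ i.castSucc)) n (σ (Fin.last n))

/-- the chain of nodes along a branch -/
def SchemeData.chain (D : SchemeData κ P μ) (f : ∀ n : ℕ, (μ n).ord.ToType) (n : ℕ) :
    {l : List κ.ord.ToType // l ∈ treeOf P} :=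
  D.node n (fun i => f i)

theorem SchemeData.chain_succ (D : SchemeData κ P μ) (f : ∀ n : ℕ, (μ n).ord.ToType) (n : ℕ) :
    D.chain f (n+1) = D.g (D.chain f n) n (f n) := rfl

theorem SchemeData.chain_prefix (D : SchemeData κ P μ) (f : ∀ n : ℕ, (μ n).ord.ToType)
    {m n : ℕ} (h : m ≤ n) : (D.chain f m).1 <+: (D.chain f n).1 := by
  induction n with
  | zero => rw [Nat.le_zero.1 h]
  | succ n ih =>
    rcases Nat.lt_or_ge m (n+1) with h' | h'
    · exact (ih (Nat.lt_succ_iff.1 h')).trans (by rw [D.chain_succ]; exact D.pre _ _ _)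
    · rw [le_antisymm h h']

theorem SchemeData.chain_length (D : SchemeData κ P μ) (f : ∀ n : ℕ, (μ n).ord.ToType)
    (n : ℕ) : n ≤ ((D.chain f n).1).length := by
  induction n with
  | zero => exact Nat.zero_le _
  | succ n ih =>
    have := D.lt (D.chain f n) n (f n)
    rw [← D.chain_succ] at this
    omega

/-- the branch point associated to `f` -/
def SchemeData.branch (D : SchemeData κ P μ) (d : κ.ord.ToType)
    (f : ∀ n : ℕ, (μ n).ord.ToType) : ℕ → κ.ord.ToType :=
  fun k => ((D.chain f (k+1)).1).getD k d

theorem SchemeData.seg_branch (D : SchemeData κ P μ) (d : κ.ord.ToType)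
    (f : ∀ n : ℕ, (μ n).ord.ToType) (m : ℕ) :
    seg (D.branch d f) ((D.chain f m).1).length = (D.chain f m).1 := by
  apply List.ext_getElem (by simp)
  intro j h1 h2
  have hj : j < ((D.chain f m).1).length := h2
  have hgoal : (seg (D.branch d f) ((D.chain f m).1).length)[j] = D.branch d f j := by
    simp [seg]
  rw [hgoal]
  unfold SchemeData.branch
  -- compare chain (j+1) and chain m
  rcases Nat.le_total (j+1) m with h | h
  · have hpre := D.chain_prefix f h
    have hjlen : j < ((D.chain f (j+1)).1).length := D.chain_length f (j+1)
    rw [List.getD_eq_getElem _ _ hjlen]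
    exact hpre.getElem hjlen
  · have hpre := D.chain_prefix f h
    have hjlen : j < ((D.chain f (j+1)).1).length :=
      lt_of_lt_of_le hj hpre.length_le
    rw [List.getD_eq_getElem _ _ hjlen]
    exact (hpre.getElem hj).symm

theorem SchemeData.branch_mem (D : SchemeData κ P μ) (d : κ.ord.ToType) (hP : IsClosed P)
    (f : ∀ n : ℕ, (μ n).ord.ToType) : D.branch d f ∈ P := by
  apply hP.closure_subset
  rw [mem_closure_iff_agree]
  intro n
  obtain ⟨y, hy, hseg⟩ := (D.chain f n).2
  refine ⟨y, hy, ?_⟩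
  intro i hi
  have hlen : n ≤ ((D.chain f n).1).length := D.chain_length f n
  have h1 : seg y ((D.chain f n).1).length = (D.chain f n).1 := hseg
  have h2 := D.seg_branch d f n
  have : seg y ((D.chain f n).1).length = seg (D.branch d f) ((D.chain f n).1).length :=
    h1.trans h2.symm
  have := congrArg (fun l => l.getD i d) this
  rwa [seg_getD _ (lt_of_lt_of_le hi hlen) d, seg_getD _ (lt_of_lt_of_le hi hlen) d] at this

theorem SchemeData.branch_injective (D : SchemeData κ P μ) (d : κ.ord.ToType) :
    Function.Injective (D.branch d) := by
  intro f f' hff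
  by_contra hne
  classical
  have hex : ∃ n, f n ≠ f' n := by
    by_contra hc
    push_neg at hc
    exact hne (funext hc)
  let n₀ := Nat.find hex
  have hn₀ : f n₀ ≠ f' n₀ := Nat.find_spec hex
  have hmin : ∀ i < n₀, f i = f' i := fun i hi => by
    by_contra hcc
    exact Nat.find_min hex hi hcc
  have hch : D.chain f n₀ = D.chain f' n₀ := by
    unfold SchemeData.chain
    congr 1
    funext i
    exact hmin i i.2
  have hanti := D.anti (D.chain f n₀) n₀ (f n₀) (f' n₀) hn₀
  rw [hch] at hanti  -- careful: rewrite in second arg only needed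
  -- both chains at n₀+1 are initial segments of the same branch
  have h1 : seg (D.branch d f) ((D.chain f (n₀+1)).1).length = (D.chain f (n₀+1)).1 :=
    D.seg_branch d f (n₀+1)
  have h2 : seg (D.branch d f') ((D.chain f' (n₀+1)).1).length = (D.chain f' (n₀+1)).1 :=
    D.seg_branch d f' (n₀+1)
  rw [← hff] at h2
  have hcomp : (D.chain f (n₀+1)).1 <+: (D.chain f' (n₀+1)).1 ∨
      (D.chain f' (n₀+1)).1 <+: (D.chain f (n₀+1)).1 := by
    rcases Nat.le_total ((D.chain f (n₀+1)).1).length ((D.chain f' (n₀+1)).1).length with h | h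
    · left; rw [← h1, ← h2]; exact seg_prefix _ h
    · right; rw [← h1, ← h2]; exact seg_prefix _ h
  have e1 : D.chain f (n₀+1) = D.g (D.chain f n₀) n₀ (f n₀) := D.chain_succ f n₀
  have e2 : D.chain f' (n₀+1) = D.g (D.chain f' n₀) n₀ (f' n₀) := D.chain_succ f' n₀
  rw [e1, e2, ← hch] at hcomp
  rcases hcomp with h | h
  · exact D.anti (D.chain f n₀) n₀ (f n₀) (f' n₀) hn₀ h
  · exact D.anti (D.chain f n₀) n₀ (f' n₀) (f n₀) (Ne.symm hn₀) h

end Aux2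

-- now the main cardinality lemma
theorem perfect_card_gt
    (hsl : ∀ c < Cardinal.aleph.{u} Ordinal.omega0, 2 ^ c < Cardinal.aleph Ordinal.omega0)
    {P : Set (ℕ → (Cardinal.aleph.{u} Ordinal.omega0).ord.ToType)}
    (hP : IsKappaPerfect (Cardinal.aleph.{u} Ordinal.omega0) P) :
    Cardinal.aleph.{u} Ordinal.omega0 < #P := by
  set μ : ℕ → Cardinal.{u} := fun n => Cardinal.aleph ((n : Ordinal) + 1) with hμdef
  have hμinf : ∀ n, ℵ₀ ≤ μ n := fun n => Cardinal.aleph0_le_aleph _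
  have hμlt : ∀ n : ℕ, μ n < Cardinal.aleph Ordinal.omega0 := by
    intro n
    rw [hμdef]
    apply Cardinal.aleph_lt_aleph.2
    have : ((n : Ordinal) + 1) = ((n + 1 : ℕ) : Ordinal) := (Nat.cast_succ n).symm
    rw [this]
    exact Ordinal.nat_lt_omega0 (n + 1)
  have hμpow : ∀ n, 2 ^ μ n < Cardinal.aleph Ordinal.omega0 := fun n => hsl _ (hμlt n)
  obtain ⟨x0, hx0⟩ := hP.1
  -- build the scheme
  have hgex : ∀ (l : {l : List (Cardinal.aleph Ordinal.omega0).ord.ToType // l ∈ treeOf P})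
      (n : ℕ), ∃ g : (μ n).ord.ToType → List (Cardinal.aleph Ordinal.omega0).ord.ToType,
        (∀ a, g a ∈ treeOf P ∧ l.1 <+: g a ∧ l.1.length < (g a).length) ∧
        ∀ a b, a ≠ b → ¬ (g a <+: g b) :=
    fun l n => exists_antichain (μ := μ n) hP l.2 (hμinf n) (hμpow n)
  choose gf hg1 hg2 using hgex
  let D : SchemeData (Cardinal.aleph Ordinal.omega0) P μ :=
    { root := ⟨seg x0 0, seg_mem_treeOf hx0 0⟩
      g := fun l n a => ⟨gf l n a, (hg1 l n a).1⟩
      pre := fun l n a => (hg1 l n a).2.1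
      lt := fun l n a => (hg1 l n a).2.2
      anti := fun l n a b hab => hg2 l n a b hab }
  -- the injection into P
  have hinj : #(∀ n : ℕ, (μ n).ord.ToType) ≤ #P := by
    refine Cardinal.mk_le_of_injective (f := fun f =>
      (⟨D.branch (x0 0) f, D.branch_mem (x0 0) hP.2.1 f⟩ : P)) ?_
    intro f f' h
    apply D.branch_injective (x0 0)
    exact congrArg Subtype.val h
  -- cardinal arithmetic: κ ≤ sum ℵ_n < prod ℵ_(n+1) = #(Π n, μ n)
  have hprod : #(∀ n : ℕ, (μ n).ord.ToType) = Cardinal.prod (fun n : ℕ => μ n) := by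
    rw [Cardinal.mk_pi]
    congr 1
    funext n
    exact Cardinal.mk_ord_toType (μ n)
  have hsum : Cardinal.aleph Ordinal.omega0 ≤
      Cardinal.sum (fun n : ℕ => Cardinal.aleph (n : Ordinal)) := by
    rw [Cardinal.aleph_limit Ordinal.isSuccLimit_omega0]
    apply ciSup_le'
    intro a
    obtain ⟨n, hn⟩ := Ordinal.lt_omega0.1 a.2
    have : Cardinal.aleph a.1 = Cardinal.aleph (n : Ordinal) := by rw [hn]
    rw [this]
    exact Cardinal.le_sum _ n
  have hlt : Cardinal.sum (fun n : ℕ => Cardinal.aleph (n : Ordinal)) <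
      Cardinal.prod (fun n : ℕ => μ n) := by
    apply Cardinal.sum_lt_prod
    intro n
    apply Cardinal.aleph_lt_aleph.2
    exact lt_add_one _
  calc Cardinal.aleph Ordinal.omega0 ≤ _ := hsum
  _ < _ := hlt
  _ = #(∀ n : ℕ, (μ n).ord.ToType) := hprod.symm
  _ ≤ #P := hinj

section closeds
variable {κ : Cardinal.{u}}

/-- the whole space is perfect -/
theorem univ_perfect (hκ : ℵ₀ ≤ κ) (hκ0 : κ ≠ 0) :
    IsKappaPerfect κ (Set.univ : Set (ℕ → κ.ord.ToType)) := by
  have hX : Nonempty κ.ord.ToType := by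
    rw [Ordinal.toType_nonempty_iff_ne_zero]
    simpa using hκ0
  refine ⟨⟨fun _ => Classical.choice hX, trivial⟩, isClosed_univ, ?_⟩
  intro x _ U hU hxU
  obtain ⟨n, hn⟩ := exists_agree_subset hU hxU
  have : #(κ.ord.ToType) ≤ #(Set.univ ∩ U : Set _) := by
    refine Cardinal.mk_le_of_injective (f := fun a =>
      ⟨fun i => if i = n then a else x i, trivial, hn fun i hi => by simp [Nat.ne_of_lt hi]⟩) ?_
    intro a b hab
    have := congrFun (congrArg Subtype.val hab) n
    simpa using this
  rwa [Cardinal.mk_ord_toType] at this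

/-- there are at most `2 ^ κ` closed sets -/
theorem mk_closeds_le (hκ : ℵ₀ ≤ κ) :
    #{C : Set (ℕ → κ.ord.ToType) // IsClosed C} ≤ 2 ^ κ := by
  have hX : #(κ.ord.ToType) = κ := Cardinal.mk_ord_toType κ
  have : Infinite κ.ord.ToType := by
    rw [Cardinal.infinite_iff, hX]; exact hκ
  have hinj : #{C : Set (ℕ → κ.ord.ToType) // IsClosed C} ≤
      #(Set (List κ.ord.ToType)) := by
    refine Cardinal.mk_le_of_injective (f := fun C => treeOf C.1) ?_
    intro C D h
    exact Subtype.ext (closed_eq_of_treeOf C.2 D.2 h)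
  rwa [Cardinal.mk_set, Cardinal.mk_list_eq_mk, hX] at hinj

end closeds

/-- The Bernstein-set construction: assuming `2 ^ κ ≤ κ⁺` for `κ = ℵ_ω` strong limit,
some set fails the PSP. This contradicts `hpsp`. -/
theorem bernstein_contradiction
    (hsl : ∀ c < Cardinal.aleph.{u} Ordinal.omega0, 2 ^ c < Cardinal.aleph Ordinal.omega0)
    (hpsp : ∀ A : Set (ℕ → (Cardinal.aleph.{u} Ordinal.omega0).ord.ToType),
      HasKappaPSP (Cardinal.aleph Ordinal.omega0) A)
    (hle : 2 ^ Cardinal.aleph.{u} Ordinal.omega0 ≤ Order.succ (Cardinal.aleph Ordinal.omega0)) :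
    False := by
  set κ := Cardinal.aleph.{u} Ordinal.omega0 with hκdef
  have hκinf : ℵ₀ ≤ κ := Cardinal.aleph0_le_aleph _
  have hκ0 : κ ≠ 0 := (Cardinal.aleph0_pos.trans_le hκinf).ne'
  set X := κ.ord.ToType with hXdef
  set ι := (Order.succ κ).ord.ToType with hιdef
  have hι : #ι = Order.succ κ := Cardinal.mk_ord_toType _
  -- the collection of perfect sets
  set Perf := {Q : Set (ℕ → X) // IsKappaPerfect κ Q} with hPerfdef
  have hPerfNe : Nonempty Perf := ⟨⟨Set.univ, univ_perfect hκinf hκ0⟩⟩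
  have hPerfle : #Perf ≤ #ι := by
    rw [hι]
    refine le_trans ?_ (le_trans (mk_closeds_le hκinf) hle)
    exact Cardinal.mk_le_of_injective (f := fun Q => (⟨Q.1, Q.2.2.1⟩ :
      {C : Set (ℕ → X) // IsClosed C})) (fun Q Q' h => Subtype.ext (by simpa using congrArg Subtype.val h))
  obtain ⟨e⟩ := Cardinal.le_def _ _ |>.1 hPerfle
  set Pe : ι → Perf := Function.invFun e with hPedef
  have hPe : ∀ Q : Perf, Pe (e Q) = Q := Function.leftInverse_invFun e.injective
  -- the key step existence
  have hIio : ∀ i : ι, #(Set.Iio i) ≤ κ := by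
    intro i
    have := Cardinal.mk_Iio_ord_toType i
    exact Order.lt_succ_iff.1 this
  have key : ∀ (i : ι) (prev : ∀ j : ι, j < i → (ℕ → X) × (ℕ → X)),
      ∃ p : (ℕ → X) × (ℕ → X), p.1 ∈ (Pe i).1 ∧ p.2 ∈ (Pe i).1 ∧ p.1 ≠ p.2 ∧
        ∀ j (h : j < i), p.1 ≠ (prev j h).1 ∧ p.1 ≠ (prev j h).2 ∧
          p.2 ≠ (prev j h).1 ∧ p.2 ≠ (prev j h).2 := by
    intro i prev
    set Bad : Set (ℕ → X) :=
      {y | ∃ j : ι, ∃ h : j < i, y = (prev j h).1 ∨ y = (prev j h).2} with hBaddef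
    have hBad : #Bad ≤ κ := by
      have h1 : Bad ⊆ (Set.range fun j : Set.Iio i => (prev j.1 j.2).1) ∪
          (Set.range fun j : Set.Iio i => (prev j.1 j.2).2) := by
        rintro y ⟨j, h, hy | hy⟩
        · exact Or.inl ⟨⟨j, h⟩, hy.symm⟩
        · exact Or.inr ⟨⟨j, h⟩, hy.symm⟩
      calc #Bad ≤ #((Set.range fun j : Set.Iio i => (prev j.1 j.2).1) ∪
          (Set.range fun j : Set.Iio i => (prev j.1 j.2).2) : Set _) :=
            Cardinal.mk_le_mk_of_subset h1
      _ ≤ #(Set.range fun j : Set.Iio i => (prev j.1 j.2).1) +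
          #(Set.range fun j : Set.Iio i => (prev j.1 j.2).2) := Cardinal.mk_union_le _ _
      _ ≤ #(Set.Iio i) + #(Set.Iio i) := add_le_add Cardinal.mk_range_le Cardinal.mk_range_le
      _ ≤ κ + κ := add_le_add (hIio i) (hIio i)
      _ = κ := Cardinal.add_eq_self hκinf
    have hQbig : κ < #((Pe i).1) := perfect_card_gt hsl (Pe i).2
    have hnontriv : 1 < #((Pe i).1 \ Bad : Set _) := by
      by_contra hsmall
      push_neg at hsmall
      have : #((Pe i).1) ≤ κ := by
        calc #((Pe i).1) ≤ #(((Pe i).1 \ Bad : Set _) ∪ Bad : Set _) := by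
              apply Cardinal.mk_le_mk_of_subset
              intro y hy
              by_cases hb : y ∈ Bad
              · exact Or.inr hb
              · exact Or.inl ⟨hy, hb⟩
        _ ≤ #((Pe i).1 \ Bad : Set _) + #Bad := Cardinal.mk_union_le _ _
        _ ≤ 1 + κ := add_le_add hsmall hBad
        _ ≤ κ + κ := add_le_add (Cardinal.one_le_aleph0.trans hκinf) le_rfl
        _ = κ := Cardinal.add_eq_self hκinf
      exact absurd this (not_le.2 hQbig)
    rw [Cardinal.one_lt_iff_nontrivial] at hnontriv
    obtain ⟨⟨y, hy⟩, ⟨z, hz⟩, hyz⟩ := hnontriv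
    have hyz' : y ≠ z := fun h => hyz (Subtype.ext h)
    refine ⟨(y, z), hy.1, hz.1, hyz', ?_⟩
    intro j h
    constructor
    · exact fun hc => hy.2 ⟨j, h, Or.inl hc⟩
    constructor
    · exact fun hc => hy.2 ⟨j, h, Or.inr hc⟩
    constructor
    · exact fun hc => hz.2 ⟨j, h, Or.inl hc⟩
    · exact fun hc => hz.2 ⟨j, h, Or.inr hc⟩
  -- the recursion
  have wf : WellFounded ((· < ·) : ι → ι → Prop) := wellFounded_lt
  set F : ι → (ℕ → X) × (ℕ → X) :=
    wf.fix (fun i rec => Classical.choose (key i rec)) with hFdef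
  have hFeq : ∀ i, F i = Classical.choose (key i (fun j _ => F j)) := by
    intro i
    rw [hFdef]
    exact wf.fix_eq _ i
  have spec : ∀ i, (F i).1 ∈ (Pe i).1 ∧ (F i).2 ∈ (Pe i).1 ∧ (F i).1 ≠ (F i).2 ∧
      ∀ j (h : j < i), (F i).1 ≠ (F j).1 ∧ (F i).1 ≠ (F j).2 ∧
        (F i).2 ≠ (F j).1 ∧ (F i).2 ≠ (F j).2 := by
    intro i
    rw [hFeq i]
    exact Classical.choose_spec (key i (fun j _ => F j))
  -- a and b
  have hab : ∀ i j : ι, (F i).1 ≠ (F j).2 := by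
    intro i j
    rcases lt_trichotomy j i with h | h | h
    · exact ((spec i).2.2.2 j h).2.1
    · rw [h]; exact (spec i).2.2.1
    · exact fun hc => (((spec j).2.2.2 i h).2.2.1 hc.symm)
  have hbinj : Function.Injective (fun i => (F i).2) := by
    intro i j h
    by_contra hne
    rcases lt_trichotomy i j with hlt | heq | hlt
    · exact ((spec j).2.2.2 i hlt).2.2.2 h.symm
    · exact hne heq
    · exact ((spec i).2.2.2 j hlt).2.2.2 h
  -- the Bernstein set
  set B : Set (ℕ → X) := Set.range (fun i => (F i).2) with hBdef
  rcases hpsp B with hsmall | ⟨Q, hQB, hQperf⟩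
  · have : #B = Order.succ κ := by
      rw [hBdef, Cardinal.mk_range_eq _ hbinj, hι]
    rw [this] at hsmall
    exact absurd hsmall (not_le.2 (Order.lt_succ κ))
  · set q : Perf := ⟨Q, hQperf⟩ with hqdef
    have hai : (F (e q)).1 ∈ Q := by
      have h1 := (spec (e q)).1
      rw [hPe q] at h1
      exact h1
    obtain ⟨j, hj⟩ := hQB hai
    exact hab (e q) j hj.symm


theorem aleph_omega_lift : Cardinal.lift.{v, u} (Cardinal.aleph.{u} Ordinal.omega0) =
    Cardinal.aleph.{max u v} Ordinal.omega0 := by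
  rw [Cardinal.lift_aleph]
  congr 1
  exact Ordinal.lift_omega0

theorem sl_transfer
    (h : ∀ c < Cardinal.aleph.{u} Ordinal.omega0, 2 ^ c < Cardinal.aleph Ordinal.omega0) :
    ∀ c < Cardinal.aleph.{v} Ordinal.omega0, 2 ^ c < Cardinal.aleph Ordinal.omega0 := by
  intro c hc
  have h1 : Cardinal.lift.{u, v} c < Cardinal.lift.{v, u} (Cardinal.aleph.{u} Ordinal.omega0) := by
    rw [aleph_omega_lift.{u, v}, ← aleph_omega_lift.{v, u}]
    exact Cardinal.lift_lt.2 hc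
  obtain ⟨c', hlt, heq⟩ := Cardinal.lt_lift_iff.1 h1
  have h3 : Cardinal.lift.{v, u} (2 ^ c') <
      Cardinal.lift.{v, u} (Cardinal.aleph.{u} Ordinal.omega0) :=
    Cardinal.lift_lt.2 (h c' hlt)
  rw [Cardinal.lift_power, Cardinal.lift_two, heq] at h3
  rw [aleph_omega_lift.{u, v}, ← aleph_omega_lift.{v, u}] at h3
  apply Cardinal.lift_lt.1
  show Cardinal.lift.{u, v} (2 ^ c) < Cardinal.lift.{u, v} (Cardinal.aleph.{v} Ordinal.omega0)
  rw [Cardinal.lift_power, Cardinal.lift_two]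
  exact h3

theorem le_succ_transfer
    (h : 2 ^ Cardinal.aleph.{u} Ordinal.omega0 ≤ Order.succ (Cardinal.aleph Ordinal.omega0)) :
    2 ^ Cardinal.aleph.{v} Ordinal.omega0 ≤ Order.succ (Cardinal.aleph Ordinal.omega0) := by
  have h1 : Cardinal.lift.{v, u} (2 ^ Cardinal.aleph.{u} Ordinal.omega0) ≤
      Cardinal.lift.{v, u} (Order.succ (Cardinal.aleph.{u} Ordinal.omega0)) :=
    Cardinal.lift_le.2 h
  rw [Cardinal.lift_power, Cardinal.lift_two, Cardinal.lift_succ, aleph_omega_lift.{u, v}] at h1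
  apply Cardinal.lift_le.1
  show Cardinal.lift.{u, v} _ ≤ Cardinal.lift.{u, v} _
  rw [Cardinal.lift_power, Cardinal.lift_two, Cardinal.lift_succ, aleph_omega_lift.{v, u}]
  exact h1

/-- If ℵ_ω is a strong limit cardinal and every subset of (ℵ_ω)^ω has the ℵ_ω-PSP, then
◊_{ℵ_{ω+1}} fails: there is no ◊_{ℵ_{ω+1}}-sequence. -/
theorem diamond_fails_at_aleph_omega_succ
    (hsl : ∀ c < Cardinal.aleph Ordinal.omega0, 2 ^ c < Cardinal.aleph Ordinal.omega0)
    (hpsp : ∀ A : Set (ℕ → (Cardinal.aleph Ordinal.omega0).ord.ToType),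
      HasKappaPSP (Cardinal.aleph Ordinal.omega0) A) :
    ¬ ∃ A : Ordinal → Set Ordinal,
      IsDiamondSeq (Order.succ (Cardinal.aleph Ordinal.omega0)).ord A := by
  rintro ⟨A, hA⟩
  exact bernstein_contradiction (sl_transfer hsl) hpsp
    (le_succ_transfer (two_power_le_of_diamond hA))
end
end

section
/- If ℵ_ω is a strong limit cardinal, then there exists a set A ⊆ (ℵ_ω)^ω whose cardinality is strictly greater than ℵ_ω and which contains no ℵ_ω-perfect subset; in particular, A does not have the ℵ_ω-PSP. (Bernstein's argument at ℵ_ω, used in the proof of Proposition 3.4(1); it uses the Axiom of Choice.) -/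
noncomputable section
open Cardinal Set

namespace BernsteinAux
universe u
variable {κ : Cardinal.{u}}

abbrev X (κ : Cardinal.{u}) := ℕ → κ.ord.ToType

def cyl (x : X κ) (n : ℕ) : Set (X κ) := {y | ∀ m < n, y m = x m}

lemma self_mem_cyl (x : X κ) (n : ℕ) : x ∈ cyl x n := fun _ _ => rfl

lemma isOpen_cyl (x : X κ) (n : ℕ) : IsOpen (cyl x n) := by
  have h : cyl x n = ⋂ m ∈ Finset.range n, (fun y : X κ => y m) ⁻¹' {x m} := by
    ext y; simp [cyl]
  rw [h]
  exact isOpen_biInter_finset fun m _ =>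
    (isOpen_discrete _).preimage (continuous_apply m)

lemma exists_cyl_subset {U : Set (X κ)} (hU : IsOpen U) {x : X κ} (hx : x ∈ U) :
    ∃ n, cyl x n ⊆ U := by
  rcases isOpen_pi_iff.1 hU x hx with ⟨I, u, h1, h2⟩
  refine ⟨(I.sup id) + 1, fun y hy => h2 ?_⟩
  intro i hi
  have hlt : i < I.sup id + 1 := Nat.lt_succ_of_le (Finset.le_sup (f := id) hi)
  rw [hy i hlt]
  exact (h1 i hi).2

lemma mem_of_closed {P : Set (X κ)} (hP : IsClosed P) {z : X κ}
    (h : ∀ n, ∃ y ∈ P, ∀ m < n, y m = z m) : z ∈ P := by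
  by_contra hz
  rcases exists_cyl_subset hP.isOpen_compl (by exact hz) with ⟨n, hn⟩
  rcases h n with ⟨y, hyP, hy⟩
  exact hn (fun m hm => hy m hm) hyP

section Tree

variable (hsl : ∀ c < κ, 2 ^ c < κ) {P : Set (X κ)} (hP : IsKappaPerfect κ P)
include hsl hP

lemma split {c : Cardinal.{u}} (hc : ℵ₀ ≤ c) (hcκ : c < κ) {x : X κ} (hx : x ∈ P) (n : ℕ) :
    ∃ m, n < m ∧
      c ≤ #{s : Fin m → κ.ord.ToType | ∃ y ∈ P ∩ cyl x n, ∀ i : Fin m, y i = s i} := by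
  by_contra hcon
  push_neg at hcon
  set W : Set (X κ) := P ∩ cyl x n with hW
  have hWbig : κ ≤ #W := hP.2.2 x hx (cyl x n) (isOpen_cyl x n) (self_mem_cyl x n)
  -- injection from W into the product of the restriction images
  set S : ℕ → Type u := fun m =>
    {s : Fin m → κ.ord.ToType | ∃ y ∈ P ∩ cyl x n, ∀ i : Fin m, y i = s i} with hS
  have hinj : Function.Injective (fun (y : W) (m : ℕ) =>
      (⟨fun i : Fin (n+1+m) => y.1 i, ⟨y.1, y.2, fun _ => rfl⟩⟩ : S (n+1+m))) := by
    intro y y' h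
    ext t
    have := congrFun h t
    have h2 := congrArg Subtype.val this
    have h3 := congrFun h2 ⟨t, by omega⟩
    exact h3
  have hle : #W ≤ prod fun m : ℕ => #(S (n+1+m)) := by
    rw [← mk_pi]
    exact mk_le_of_injective hinj
  have hub : (prod fun m : ℕ => #(S (n+1+m))) ≤ prod fun _ : ℕ => c := by
    apply prod_le_prod
    intro m
    exact le_of_lt (hcon (n+1+m) (by omega))
  have hconst : (prod fun _ : ℕ => c) = c ^ (ℵ₀ : Cardinal.{u}) := by
    simpa using prod_const ℕ c
  have hcc : c ^ (ℵ₀ : Cardinal.{u}) ≤ 2 ^ c := by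
    calc c ^ (ℵ₀ : Cardinal.{u}) ≤ (2 ^ c) ^ (ℵ₀ : Cardinal.{u}) :=
          power_le_power_right (le_of_lt (cantor c))
      _ = 2 ^ (c * ℵ₀) := by rw [power_mul]
      _ = 2 ^ c := by rw [mul_aleph0_eq hc]
  have : κ ≤ 2 ^ c := le_trans hWbig (le_trans hle (le_trans hub (hconst ▸ hcc)))
  exact absurd (hsl c hcκ) (not_lt.2 this)

lemma extend {c : Cardinal.{u}} (hc : ℵ₀ ≤ c) (hcκ : c < κ) {x : X κ} (hx : x ∈ P) (n : ℕ) :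
    ∃ q : ℕ × (c.ord.ToType → X κ), n < q.1 ∧ (∀ i, q.2 i ∈ P) ∧
      (∀ i, ∀ t < n, q.2 i t = x t) ∧
      (∀ i j, i ≠ j → ∃ t < q.1, q.2 i t ≠ q.2 j t) := by
  obtain ⟨m, hm, hcard⟩ := split hsl hP hc hcκ hx n
  have hmk : #(c.ord.ToType) = c := by rw [Cardinal.mk_toType, card_ord]
  rw [← hmk] at hcard
  obtain ⟨g⟩ := Cardinal.le_def _ _ |>.1 hcard
  choose y hymem hyres using fun i => (g i).2
  refine ⟨(m, y), hm, fun i => (hymem i).1, fun i t ht => (hymem i).2 t ht, ?_⟩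
  intro i j hij
  have hne : (g i).1 ≠ (g j).1 := fun h => hij (g.injective (Subtype.ext h))
  obtain ⟨t, ht⟩ := Function.ne_iff.1 hne
  exact ⟨t.1, t.2, by show y i t.1 ≠ y j t.1; rw [hyres i t, hyres j t]; exact ht⟩

variable (lam : ℕ → Cardinal.{u}) (hlam : ∀ n, ℵ₀ ≤ lam n ∧ lam n < κ)
include hlam

/-- The choice of a splitting family above a point of `P`. -/
def step (n k : ℕ) (x : X κ) (hx : x ∈ P) : ℕ × ((lam k).ord.ToType → X κ) :=
  (extend hsl hP (hlam k).1 (hlam k).2 hx n).choose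

lemma step_spec (n k : ℕ) (x : X κ) (hx : x ∈ P) :
    n < (step hsl hP lam hlam n k x hx).1 ∧
    (∀ i, (step hsl hP lam hlam n k x hx).2 i ∈ P) ∧
    (∀ i, ∀ t < n, (step hsl hP lam hlam n k x hx).2 i t = x t) ∧
    (∀ i j, i ≠ j → ∃ t < (step hsl hP lam hlam n k x hx).1,
      (step hsl hP lam hlam n k x hx).2 i t ≠ (step hsl hP lam hlam n k x hx).2 j t) :=
  (extend hsl hP (hlam k).1 (hlam k).2 hx n).choose_spec

/-- The tree of nodes: at depth `n` along branch `b`, a pair (length, point of `P`). -/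
def node : ℕ → (∀ k, (lam k).ord.ToType) → {p : ℕ × X κ // p.2 ∈ P}
  | 0, _ => ⟨(0, hP.1.choose), hP.1.choose_spec⟩
  | n+1, b =>
    ⟨((step hsl hP lam hlam (node n b).1.1 n (node n b).1.2 (node n b).2).1,
      (step hsl hP lam hlam (node n b).1.1 n (node n b).1.2 (node n b).2).2 (b n)),
     (step_spec hsl hP lam hlam (node n b).1.1 n (node n b).1.2 (node n b).2).2.1 _⟩

lemma node_congr : ∀ n (b b' : ∀ k, (lam k).ord.ToType), (∀ i, i < n → b i = b' i) →
    node hsl hP lam hlam n b = node hsl hP lam hlam n b'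
  | 0, _, _, _ => rfl
  | n+1, b, b', h => by
    have ih := node_congr n b b' (fun i hi => h i (by omega))
    simp only [node, ih, h n (Nat.lt_succ_self n)]

lemma node_m_lt (n : ℕ) (b : ∀ k, (lam k).ord.ToType) :
    (node hsl hP lam hlam n b).1.1 < (node hsl hP lam hlam (n+1) b).1.1 :=
  (step_spec hsl hP lam hlam _ n _ _).1

lemma node_coh (n : ℕ) (b : ∀ k, (lam k).ord.ToType) :
    ∀ t < (node hsl hP lam hlam n b).1.1,
      (node hsl hP lam hlam (n+1) b).1.2 t = (node hsl hP lam hlam n b).1.2 t :=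
  fun t ht => (step_spec hsl hP lam hlam _ n _ _).2.2.1 _ t ht

lemma node_sep (n : ℕ) (b b' : ∀ k, (lam k).ord.ToType) (hpre : ∀ i, i < n → b i = b' i)
    (hne : b n ≠ b' n) :
    (node hsl hP lam hlam (n+1) b).1.1 = (node hsl hP lam hlam (n+1) b').1.1 ∧
    ∃ t < (node hsl hP lam hlam (n+1) b).1.1,
      (node hsl hP lam hlam (n+1) b).1.2 t ≠ (node hsl hP lam hlam (n+1) b').1.2 t := by
  have hnn := node_congr hsl hP lam hlam n b b' hpre
  constructor
  · simp only [node, hnn]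
  · obtain ⟨t, ht, hsep⟩ := (step_spec hsl hP lam hlam (node hsl hP lam hlam n b).1.1 n
      (node hsl hP lam hlam n b).1.2 (node hsl hP lam hlam n b).2).2.2.2 (b n) (b' n) hne
    refine ⟨t, ht, ?_⟩
    show (step hsl hP lam hlam _ n _ _).2 (b n) t ≠
      (node hsl hP lam hlam (n+1) b').1.2 t
    simp only [node, ← hnn]
    exact hsep

lemma node_m_mono (b : ∀ k, (lam k).ord.ToType) {n n' : ℕ} (h : n ≤ n') :
    (node hsl hP lam hlam n b).1.1 ≤ (node hsl hP lam hlam n' b).1.1 := by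
  induction n' with
  | zero => simp_all
  | succ n' ih =>
    rcases Nat.lt_or_ge n (n'+1) with h' | h'
    · exact le_trans (ih (by omega)) (le_of_lt (node_m_lt hsl hP lam hlam n' b))
    · have : n = n' + 1 := by omega
      subst this; rfl

lemma node_m_ge (n : ℕ) (b : ∀ k, (lam k).ord.ToType) :
    n ≤ (node hsl hP lam hlam n b).1.1 := by
  induction n with
  | zero => exact Nat.zero_le _
  | succ n ih => exact Nat.lt_of_le_of_lt ih (node_m_lt hsl hP lam hlam n b)

lemma node_stab (b : ∀ k, (lam k).ord.ToType) {n n' : ℕ} (h : n ≤ n') :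
    ∀ t < (node hsl hP lam hlam n b).1.1,
      (node hsl hP lam hlam n' b).1.2 t = (node hsl hP lam hlam n b).1.2 t := by
  induction n' with
  | zero =>
    have : n = 0 := by omega
    subst this; intro t ht; rfl
  | succ n' ih =>
    intro t ht
    rcases Nat.lt_or_ge n (n'+1) with h' | h'
    · have h2 : t < (node hsl hP lam hlam n' b).1.1 :=
        lt_of_lt_of_le ht (node_m_mono hsl hP lam hlam b (by omega))
      rw [node_coh hsl hP lam hlam n' b t h2]
      exact ih (by omega) t ht
    · have : n = n' + 1 := by omega
      subst this; rfl

/-- The limit point of a branch. -/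
def limitPt (b : ∀ k, (lam k).ord.ToType) : X κ :=
  fun t => (node hsl hP lam hlam (t+1) b).1.2 t

lemma limitPt_eq (b : ∀ k, (lam k).ord.ToType) (n : ℕ) :
    ∀ t < (node hsl hP lam hlam n b).1.1,
      limitPt hsl hP lam hlam b t = (node hsl hP lam hlam n b).1.2 t := by
  intro t ht
  have ht1 : t < (node hsl hP lam hlam (t+1) b).1.1 :=
    Nat.lt_of_lt_of_le (Nat.lt_succ_self t) (node_m_ge hsl hP lam hlam (t+1) b)
  rcases Nat.le_total (t+1) n with h | h
  · exact (node_stab hsl hP lam hlam b h t ht1).symm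
  · exact node_stab hsl hP lam hlam b h t ht

lemma limitPt_mem (b : ∀ k, (lam k).ord.ToType) : limitPt hsl hP lam hlam b ∈ P := by
  apply mem_of_closed hP.2.1
  intro k
  refine ⟨(node hsl hP lam hlam k b).1.2, (node hsl hP lam hlam k b).2, ?_⟩
  intro t ht
  exact (limitPt_eq hsl hP lam hlam b k t
    (lt_of_lt_of_le ht (node_m_ge hsl hP lam hlam k b))).symm

lemma limitPt_inj : Function.Injective (limitPt hsl hP lam hlam) := by
  intro b b' hzz
  by_contra hbb
  have hex : ∃ n, b n ≠ b' n := by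
    by_contra h; push_neg at h; exact hbb (funext h)
  classical
  let n := Nat.find hex
  have hne : b n ≠ b' n := Nat.find_spec hex
  have hpre : ∀ i, i < n → b i = b' i := fun i hi => by
    by_contra h; exact absurd hi (not_lt.2 (Nat.find_le h))
  obtain ⟨hmeq, t, ht, hsep⟩ := node_sep hsl hP lam hlam n b b' hpre hne
  apply hsep
  rw [← limitPt_eq hsl hP lam hlam b (n+1) t ht,
      ← limitPt_eq hsl hP lam hlam b' (n+1) t (hmeq ▸ ht), hzz]

lemma prod_le_mk_perfect : prod lam ≤ #P := by
  have h1 : #(∀ k, (lam k).ord.ToType) ≤ #P := by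
    apply mk_le_of_injective (f := fun b => (⟨limitPt hsl hP lam hlam b,
      limitPt_mem hsl hP lam hlam b⟩ : P))
    intro b b' h
    exact limitPt_inj hsl hP lam hlam (congrArg Subtype.val h)
  calc prod lam = prod (fun k => #((lam k).ord.ToType)) := by
        congr 1; funext k; rw [Cardinal.mk_toType, card_ord]
    _ = #(∀ k, (lam k).ord.ToType) := (mk_pi _).symm
    _ ≤ #P := h1

end Tree
section Counting

lemma mk_closeds_le (hκ : ℵ₀ ≤ κ) : #{C : Set (X κ) // IsClosed C} ≤ 2 ^ κ := by
  classical
  set code : {C : Set (X κ) // IsClosed C} → Set (Σ n : ℕ, Fin n → κ.ord.ToType) :=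
    fun C => {q | ∀ y : X κ, (∀ i : Fin q.1, y i = q.2 i) → y ∉ C.1} with hcode
  have hsub : ∀ C C', code C = code C' → C.1 ⊆ C'.1 := by
    intro C C' h x hx
    by_contra hx'
    obtain ⟨n, hn⟩ := exists_cyl_subset C'.2.isOpen_compl (show x ∈ (C'.1)ᶜ from hx')
    have hq : (⟨n, fun i => x i⟩ : Σ n : ℕ, Fin n → κ.ord.ToType) ∈ code C' := by
      intro y hy
      exact hn (fun m hm => hy ⟨m, hm⟩)
    rw [← h] at hq
    exact hq x (fun i => rfl) hx
  have hinj : Function.Injective code := fun C C' h =>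
    Subtype.ext (le_antisymm (hsub C C' h) (hsub C' C h.symm))
  have h1 : #{C : Set (X κ) // IsClosed C} ≤ #(Set (Σ n : ℕ, Fin n → κ.ord.ToType)) :=
    mk_le_of_injective hinj
  have h2 : #(Σ n : ℕ, Fin n → κ.ord.ToType) ≤ κ := by
    rw [mk_sigma]
    have hb : ∀ n : ℕ, #(Fin n → κ.ord.ToType) ≤ κ := by
      intro n
      have he : #(Fin n → κ.ord.ToType) = κ ^ (n : Cardinal.{u}) := by
        rw [mk_arrow]
        simp
      rw [he]
      have := power_nat_le (n := n) hκ
      simpa using this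
    calc sum (fun n : ℕ => #(Fin n → κ.ord.ToType)) ≤ sum (fun _ : ℕ => κ) :=
          sum_le_sum _ _ hb
      _ = ℵ₀ * κ := by rw [sum_const]; simp
      _ = κ := aleph0_mul_eq hκ
  calc #{C : Set (X κ) // IsClosed C} ≤ #(Set (Σ n : ℕ, Fin n → κ.ord.ToType)) := h1
    _ = 2 ^ #(Σ n : ℕ, Fin n → κ.ord.ToType) := mk_set
    _ ≤ 2 ^ κ := power_le_power_left two_ne_zero h2

lemma univ_perfect (hκ : ℵ₀ ≤ κ) : IsKappaPerfect κ (univ : Set (X κ)) := by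
  classical
  have hκ0 : κ ≠ 0 := (aleph0_pos.trans_le hκ).ne'
  have hT : Nonempty κ.ord.ToType :=
    Ordinal.toType_nonempty_iff_ne_zero.2 (fun h => hκ0 (ord_eq_zero.1 h))
  refine ⟨⟨fun _ => Classical.arbitrary _, trivial⟩, isClosed_univ, ?_⟩
  intro x _ U hU hxU
  obtain ⟨n, hn⟩ := exists_cyl_subset hU hxU
  have hf : Function.Injective (fun t : κ.ord.ToType =>
      (⟨fun m => if m < n then x m else t, trivial,
        hn (fun m hm => if_pos hm)⟩ : (univ ∩ U : Set (X κ)))) := by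
    intro t t' h
    have := congrFun (congrArg Subtype.val h) n
    simpa using this
  have := mk_le_of_injective hf
  rwa [Cardinal.mk_toType, card_ord] at this

end Counting

section Bern

theorem bernstein (hκ : ℵ₀ ≤ κ)
    (hbig : ∀ P : Set (X κ), IsKappaPerfect κ P → (2 : Cardinal.{u}) ^ κ ≤ #P) :
    ∃ A : Set (X κ), κ < #A ∧ ¬ ∃ P ⊆ A, IsKappaPerfect κ P := by
  classical
  set c : Cardinal.{u} := 2 ^ κ with hc
  have hcinf : ℵ₀ ≤ c := le_trans hκ (le_of_lt (cantor κ))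
  have hIcard : #c.ord.ToType = c := by rw [Cardinal.mk_toType, card_ord]
  have hIseg : ∀ i : c.ord.ToType, #{j : c.ord.ToType // j < i} < c := by
    intro i
    exact Cardinal.mk_Iio_ord_toType i
  have hPS : Nonempty {P : Set (X κ) // IsKappaPerfect κ P} := ⟨⟨univ, univ_perfect hκ⟩⟩
  have hPSle : #{P : Set (X κ) // IsKappaPerfect κ P} ≤ #c.ord.ToType := by
    rw [hIcard]
    refine le_trans ?_ (mk_closeds_le hκ)
    exact mk_le_of_injective (f := fun P => (⟨P.1, P.2.2.1⟩ : {C : Set (X κ) // IsClosed C}))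
      (fun P P' h => by simpa [Subtype.ext_iff] using h)
  obtain ⟨e0⟩ := Cardinal.le_def _ _ |>.1 hPSle
  set e : c.ord.ToType → {P : Set (X κ) // IsKappaPerfect κ P} := Function.invFun e0 with he'
  have he : Function.Surjective e := Function.invFun_surjective e0.injective
  have key : ∀ i : c.ord.ToType, ∀ g : {j : c.ord.ToType // j < i} → X κ × X κ,
      ∃ p : X κ × X κ, p.1 ∈ (e i).1 ∧ p.2 ∈ (e i).1 ∧ p.1 ≠ p.2 ∧
        ∀ j : {j : c.ord.ToType // j < i},
          p.1 ≠ (g j).1 ∧ p.1 ≠ (g j).2 ∧ p.2 ≠ (g j).1 ∧ p.2 ≠ (g j).2 := by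
    intro i g
    set B : Set (X κ) := (range fun j => (g j).1) ∪ (range fun j => (g j).2) with hB'
    have hB : #B < c := by
      refine lt_of_le_of_lt (le_trans (mk_union_le _ _)
        (add_le_add mk_range_le mk_range_le)) ?_
      exact add_lt_of_lt hcinf (hIseg i) (hIseg i)
    have hPbig : c ≤ #((e i).1) := hbig _ (e i).2
    have hdiff : c ≤ #(((e i).1 \ B : Set (X κ))) := by
      by_contra hcon
      push_neg at hcon
      have h3 : #((e i).1) ≤ #(((e i).1 \ B : Set (X κ))) + #B := le_mk_diff_add_mk _ _
      exact absurd (lt_of_le_of_lt (le_trans hPbig h3) (add_lt_of_lt hcinf hcon hB))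
        (lt_irrefl c)
    have hnt : Nontrivial (((e i).1 \ B : Set (X κ))) := by
      rw [← one_lt_iff_nontrivial]
      exact lt_of_lt_of_le (lt_of_lt_of_le one_lt_aleph0 hcinf) hdiff
    obtain ⟨a, b, hab⟩ := hnt.exists_pair_ne
    refine ⟨(a.1, b.1), a.2.1, b.2.1, fun h => hab (Subtype.ext h), ?_⟩
    intro j
    refine ⟨?_, ?_, ?_, ?_⟩ <;> intro h
    · exact a.2.2 (mem_union_left _ ⟨j, h.symm⟩)
    · exact a.2.2 (mem_union_right _ ⟨j, h.symm⟩)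
    · exact b.2.2 (mem_union_left _ ⟨j, h.symm⟩)
    · exact b.2.2 (mem_union_right _ ⟨j, h.symm⟩)
  have wf : WellFoundedLT c.ord.ToType := inferInstance
  set F : c.ord.ToType → X κ × X κ :=
    wf.wf.fix (fun i IH => (key i (fun j => IH j.1 j.2)).choose) with hF'
  have hF : ∀ i, F i = (key i (fun j => F j.1)).choose := fun i => wf.wf.fix_eq _ i
  have hFs : ∀ i : c.ord.ToType, (F i).1 ∈ (e i).1 ∧ (F i).2 ∈ (e i).1 ∧ (F i).1 ≠ (F i).2 ∧
      ∀ j : c.ord.ToType, j < i →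
        ((F i).1 ≠ (F j).1 ∧ (F i).1 ≠ (F j).2 ∧ (F i).2 ≠ (F j).1 ∧ (F i).2 ≠ (F j).2) := by
    intro i
    have spec := (key i (fun j => F j.1)).choose_spec
    rw [← hF i] at spec
    exact ⟨spec.1, spec.2.1, spec.2.2.1, fun j hj => spec.2.2.2 ⟨j, hj⟩⟩
  refine ⟨range (fun i => (F i).1), ?_, ?_⟩
  · have hinj : Function.Injective (fun i : c.ord.ToType => (F i).1) := by
      intro i j h
      by_contra hij
      rcases lt_or_gt_of_ne hij with h' | h'
      · exact ((hFs j).2.2.2 i h').1 h.symm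
      · exact ((hFs i).2.2.2 j h').1 h
    rw [mk_range_eq _ hinj, hIcard]
    exact cantor κ
  · rintro ⟨P, hPA, hPperf⟩
    obtain ⟨i, hi⟩ := he ⟨P, hPperf⟩
    have hb : (F i).2 ∈ P := by
      have := (hFs i).2.1
      rwa [hi] at this
    obtain ⟨j, hj⟩ := hPA hb
    rcases lt_trichotomy j i with h' | h' | h'
    · exact ((hFs i).2.2.2 j h').2.2.1 hj.symm
    · subst h'
      exact (hFs j).2.2.1 hj
    · exact ((hFs j).2.2.2 i h').2.1 hj

end Bern

theorem perfect_big {κ : Cardinal.{u}} (hκeq : κ = aleph Ordinal.omega0)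
    (hsl : ∀ c < κ, 2 ^ c < κ) (P : Set (X κ)) (hP : IsKappaPerfect κ P) :
    (2 : Cardinal.{u}) ^ κ ≤ #P := by
  set lam : ℕ → Cardinal.{u} := fun n => 2 ^ (aleph n) with hlam'
  have hlam : ∀ n, ℵ₀ ≤ lam n ∧ lam n < κ := fun n =>
    ⟨le_trans (aleph0_le_aleph n) (le_of_lt (cantor _)),
     hsl _ (by rw [hκeq]; exact aleph_lt_aleph.2 (Ordinal.nat_lt_omega0 n))⟩
  have h1 : κ ≤ sum (fun n : ℕ => aleph n) := by
    rw [hκeq, aleph_limit Ordinal.isSuccLimit_omega0]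
    apply ciSup_le'
    intro a
    obtain ⟨n, hn⟩ := Ordinal.lt_omega0.1 a.2
    rw [show (a : Ordinal) = (n : Ordinal) from hn]
    exact le_sum (fun n : ℕ => aleph n) n
  calc (2 : Cardinal.{u}) ^ κ
      ≤ 2 ^ sum (fun n : ℕ => aleph n) := power_le_power_left two_ne_zero h1
    _ = prod lam := power_sum 2 _
    _ ≤ #P := prod_le_mk_perfect hsl hP lam hlam

lemma sl_zero_iff :
    (∀ c < aleph.{v} Ordinal.omega0, 2 ^ c < aleph.{v} Ordinal.omega0) ↔
    (∀ c < aleph.{0} Ordinal.omega0, 2 ^ c < aleph.{0} Ordinal.omega0) := by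
  have hl : Cardinal.lift.{v, 0} (aleph.{0} Ordinal.omega0) = aleph.{v} Ordinal.omega0 := by
    rw [lift_aleph, Ordinal.lift_omega0]
  constructor
  · intro hsl c hc
    have h1 : Cardinal.lift.{v} c < aleph.{v} Ordinal.omega0 := by
      rw [← hl]; exact lift_lt.2 hc
    have h2 := hsl _ h1
    rw [← hl, ← lift_two.{v,0}, ← lift_power.{0,v}, lift_lt] at h2
    simpa using h2
  · intro hsl0 c hc
    obtain ⟨c0, rfl⟩ := Cardinal.mem_range_lift_of_le (le_of_lt (by rw [hl]; exact hc))
    rw [← hl, lift_lt] at hc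
    have h2 := hsl0 _ hc
    rw [← hl, ← lift_two.{v,0}, ← lift_power.{0,v}]
    exact lift_lt.2 h2

end BernsteinAux

/-- Bernstein's argument at ℵ_ω: if ℵ_ω is a strong limit cardinal, then there is a set
A ⊆ (ℵ_ω)^ω of cardinality strictly greater than ℵ_ω containing no ℵ_ω-perfect subset;
in particular, A does not have the ℵ_ω-PSP. -/
theorem bernstein_set_at_aleph_omega
    (hsl : ∀ c < Cardinal.aleph Ordinal.omega0, 2 ^ c < Cardinal.aleph Ordinal.omega0) :
    ∃ A : Set (ℕ → (Cardinal.aleph Ordinal.omega0).ord.ToType),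
      Cardinal.aleph Ordinal.omega0 < #A ∧
      (¬ ∃ P ⊆ A, IsKappaPerfect (Cardinal.aleph Ordinal.omega0) P) ∧
      ¬ HasKappaPSP (Cardinal.aleph Ordinal.omega0) A := by
  have hsl' := (BernsteinAux.sl_zero_iff).2 ((BernsteinAux.sl_zero_iff).1 hsl)
  obtain ⟨A, hA1, hA2⟩ := BernsteinAux.bernstein (κ := Cardinal.aleph Ordinal.omega0)
    (aleph0_le_aleph _) (fun P hP => BernsteinAux.perfect_big rfl hsl' P hP)
  refine ⟨A, hA1, hA2, ?_⟩
  rintro (h | h)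
  · exact absurd hA1 (not_lt.2 h)
  · exact hA2 h
end
end
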